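/- arXiv:1611.05901 — 3 statements merged into one kernel-verified Lean document; each statement's English description precedes it below -/
import Mathlib

section
/- Every D-finite number ξ ∈ D_{R,F} is the left limit at 1 of a power series g(z) ∈ R[[z]], convergent on the open unit disk, that is D-finite over F: ξ = lim_{z→1⁻} g(z). -/
open Filter Topology Polynomial

/-- A sequence is P-recursive over a subfield `F` of `ℂ`: it satisfies a nonzero
linear recurrence with polynomial coefficients whose coefficients lie in `F`. -/
def IsPRecursiveOver (F : Subfield ℂ) (a : ℕ → ℂ) : Prop :=
  ∃ r : ℕ, ∃ p : Fin (r + 1) → Polynomial ℂ,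
    (∀ j, ∀ k, (p j).coeff k ∈ F) ∧ p (Fin.last r) ≠ 0 ∧
    ∀ n : ℕ, ∑ j : Fin (r + 1), (p j).eval (n : ℂ) * a (n + (j : ℕ)) = 0


/-- `ξ` is a D-finite number w.r.t. a subring `R` and subfield `F` of `ℂ`. -/
def DFiniteNum (R : Subring ℂ) (F : Subfield ℂ) (ξ : ℂ) : Prop :=
  ∃ a : ℕ → ℂ, (∀ n, a n ∈ R) ∧ IsPRecursiveOver F a ∧ Tendsto a atTop (𝓝 ξ)


/-- A formal power series is D-finite over `F`: it is annihilated by a nonzero linear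
differential operator with polynomial coefficients over `F`. -/
noncomputable def IsDFiniteSeries (F : Subfield ℂ) (f : PowerSeries ℂ) : Prop :=
  ∃ r : ℕ, ∃ q : Fin (r + 1) → Polynomial ℂ,
    (∀ j k, (q j).coeff k ∈ F) ∧ q (Fin.last r) ≠ 0 ∧
    ∑ j : Fin (r + 1),
      Polynomial.coeToPowerSeries.ringHom (q j) *
        (((PowerSeries.derivative ℂ).toLinearMap ^ (j : ℕ)) f) = 0

namespace DFAux

noncomputable abbrev Dc : PowerSeries ℂ → PowerSeries ℂ := fun f => PowerSeries.derivative ℂ f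

noncomputable def app (c : ℕ → Polynomial ℂ) (s : ℕ) (f : PowerSeries ℂ) : PowerSeries ℂ :=
  ∑ k ∈ Finset.range (s + 1), (c k : PowerSeries ℂ) * Dc^[k] f

noncomputable def Dop (c : ℕ → Polynomial ℂ) : ℕ → Polynomial ℂ :=
  fun k => (if k = 0 then 0 else c (k - 1)) + derivative (c k)

lemma app_mono (c : ℕ → Polynomial ℂ) {s s' : ℕ} (hc : ∀ k, s < k → c k = 0)
    (hss : s ≤ s') (f : PowerSeries ℂ) : app c s' f = app c s f := by
  unfold app
  refine (Finset.sum_subset (Finset.range_subset_range.2 (by omega)) ?_).symm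
  intro k hk hk2
  simp only [Finset.mem_range] at hk hk2
  rw [hc k (by omega)]
  simp

lemma app_Dop (c : ℕ → Polynomial ℂ) (s : ℕ) (hc : c (s + 1) = 0) (f : PowerSeries ℂ) :
    app (Dop c) (s + 1) f = Dc (app c s f) := by
  unfold app
  simp only [Dc]
  rw [map_sum]
  have h1 : ∀ k, PowerSeries.derivative ℂ ((c k : PowerSeries ℂ) * Dc^[k] f)
      = (derivative (c k) : PowerSeries ℂ) * Dc^[k] f + (c k : PowerSeries ℂ) * Dc^[k + 1] f := by
    intro k
    rw [Derivation.leibniz, PowerSeries.derivative_coe, Function.iterate_succ_apply']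
    simp only [smul_eq_mul, Dc]
    ring
  simp only [h1]
  rw [Finset.sum_add_distrib]
  have h2 : ∀ k, (Dop c k : PowerSeries ℂ) * Dc^[k] f
      = (((if k = 0 then 0 else c (k - 1)) : Polynomial ℂ) : PowerSeries ℂ) * Dc^[k] f
        + (derivative (c k) : PowerSeries ℂ) * Dc^[k] f := by
    intro k
    rw [Dop]
    push_cast
    ring
  simp only [h2]
  rw [Finset.sum_add_distrib, add_comm]
  congr 1
  · rw [Finset.sum_range_succ, hc]
    simp
  · rw [Finset.sum_range_succ' (fun k => (((if k = 0 then 0 else c (k - 1)) : Polynomial ℂ) : PowerSeries ℂ) * Dc^[k] f)]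
    simp [Function.iterate_succ_apply]

lemma Dop_support (c : ℕ → Polynomial ℂ) (s : ℕ) (hc : ∀ k, s < k → c k = 0) :
    ∀ k, s + 1 < k → Dop c k = 0 := by
  intro k hk
  rw [Dop, hc k (by omega), hc (k-1) (by omega)]
  simp [show k ≠ 0 by omega]

lemma Dop_top (c : ℕ → Polynomial ℂ) (s : ℕ) (hc : ∀ k, s < k → c k = 0) :
    Dop c (s + 1) = c s := by
  rw [Dop, hc (s+1) (by omega)]
  simp

lemma DopIter_support (r : ℕ) (c : ℕ → Polynomial ℂ) (s : ℕ) (hc : ∀ k, s < k → c k = 0) :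
    ∀ k, s + r < k → Dop^[r] c k = 0 := by
  induction r with
  | zero => simpa using hc
  | succ r ih =>
    rw [Function.iterate_succ_apply']
    intro k hk
    exact Dop_support _ (s + r) ih k (by omega)

lemma DopIter_top (r : ℕ) (c : ℕ → Polynomial ℂ) (s : ℕ) (hc : ∀ k, s < k → c k = 0) :
    Dop^[r] c (s + r) = c s := by
  induction r with
  | zero => simp
  | succ r ih =>
    rw [Function.iterate_succ_apply', show s + (r+1) = (s + r) + 1 by omega,
      Dop_top _ _ (DopIter_support r c s hc), ih]

lemma app_DopIter (r : ℕ) (c : ℕ → Polynomial ℂ) (s : ℕ) (hc : ∀ k, s < k → c k = 0)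
    (f : PowerSeries ℂ) : app (Dop^[r] c) (s + r) f = Dc^[r] (app c s f) := by
  induction r with
  | zero => simp
  | succ r ih =>
    rw [Function.iterate_succ_apply', show s + (r+1) = (s + r) + 1 by omega,
      app_Dop _ _ (DopIter_support r c s hc _ (by omega)), ih,
      Function.iterate_succ_apply']

-- theta powers
noncomputable def th : ℕ → ℕ → Polynomial ℂ
  | 0 => fun k => if k = 0 then 1 else 0
  | (m+1) => fun k => X * Dop (th m) k

lemma th_support (m : ℕ) : ∀ k, m < k → th m k = 0 := by
  induction m with
  | zero => intro k hk; simp [th, show k ≠ 0 by omega]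
  | succ m ih =>
    intro k hk
    simp only [th, Dop, ih k (by omega), ih (k-1) (by omega)]
    simp

lemma th_top (m : ℕ) : th m m = X ^ m := by
  induction m with
  | zero => simp [th]
  | succ m ih =>
    simp only [th, Dop, th_support m (m+1) (by omega)]
    simp only [show m + 1 ≠ 0 by omega, if_neg, Nat.add_sub_cancel, map_zero, add_zero, ite_false]
    rw [ih, pow_succ]
    ring

lemma app_constMul (A : Polynomial ℂ) (c : ℕ → Polynomial ℂ) (s : ℕ) (f : PowerSeries ℂ) :
    app (fun k => A * c k) s f = (A : PowerSeries ℂ) * app c s f := by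
  unfold app
  rw [Finset.mul_sum]
  refine Finset.sum_congr rfl fun k _ => ?_
  push_cast
  ring

lemma X_mul_D (d : ℕ → ℂ) :
    (PowerSeries.X : PowerSeries ℂ) * Dc (PowerSeries.mk d)
      = PowerSeries.mk (fun n => (n : ℂ) * d n) := by
  ext n
  cases n with
  | zero => simp
  | succ n =>
    rw [PowerSeries.coeff_succ_X_mul]
    simp [Dc, PowerSeries.coeff_derivative]
    ring

lemma th_app (m : ℕ) (d : ℕ → ℂ) :
    app (th m) m (PowerSeries.mk d) = PowerSeries.mk (fun n => (n : ℂ) ^ m * d n) := by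
  induction m generalizing d with
  | zero =>
    unfold app
    ext n
    simp [th]
  | succ m ih =>
    have h1 : app (th (m+1)) (m+1) (PowerSeries.mk d)
        = ((X : Polynomial ℂ) : PowerSeries ℂ) * Dc (app (th m) m (PowerSeries.mk d)) := by
      rw [show th (m+1) = fun k => X * Dop (th m) k from rfl, app_constMul,
        app_Dop _ _ (th_support m (m+1) (by omega)) _]
    rw [h1, ih, Polynomial.coe_X, X_mul_D]
    ext n
    simp only [PowerSeries.coeff_mk, pow_succ]
    ring

noncomputable def opC (q : Polynomial ℂ) : ℕ → Polynomial ℂ :=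
  fun k => ∑ m ∈ Finset.range (q.natDegree + 1), C (q.coeff m) * th m k

lemma opC_support (q : Polynomial ℂ) : ∀ k, q.natDegree < k → opC q k = 0 := by
  intro k hk
  unfold opC
  refine Finset.sum_eq_zero fun m hm => ?_
  rw [th_support m k (by simp at hm; omega)]
  simp

lemma th_app' (m s : ℕ) (hms : m ≤ s) (d : ℕ → ℂ) :
    app (th m) s (PowerSeries.mk d) = PowerSeries.mk (fun n => (n : ℂ) ^ m * d n) := by
  rw [app_mono _ (th_support m) hms, th_app]

lemma app_sum {ι : Type*} (u : Finset ι) (c : ι → ℕ → Polynomial ℂ) (s : ℕ) (f : PowerSeries ℂ) :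
    app (fun k => ∑ i ∈ u, c i k) s f = ∑ i ∈ u, app (c i) s f := by
  unfold app
  rw [Finset.sum_comm]
  refine Finset.sum_congr rfl fun k _ => ?_
  rw [← Finset.sum_mul]
  congr 1
  simp only [← Polynomial.coeToPowerSeries.ringHom_apply, map_sum]

lemma opC_app (q : Polynomial ℂ) (s : ℕ) (hs : q.natDegree ≤ s) (d : ℕ → ℂ) :
    app (opC q) s (PowerSeries.mk d)
      = PowerSeries.mk (fun n => q.eval (n : ℂ) * d n) := by
  unfold opC
  rw [app_sum]
  have h1 : ∀ m ∈ Finset.range (q.natDegree + 1),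
      app (fun k => C (q.coeff m) * th m k) s (PowerSeries.mk d)
        = PowerSeries.mk (fun n => q.coeff m * ((n:ℂ)^m * d n)) := by
    intro m hm
    simp only [Finset.mem_range] at hm
    rw [app_constMul, th_app' m s (by omega), Polynomial.coe_C]
    ext n
    simp
  rw [Finset.sum_congr rfl h1]
  ext n
  rw [map_sum]
  simp only [PowerSeries.coeff_mk]
  rw [Polynomial.eval_eq_sum_range, Finset.sum_mul]
  refine Finset.sum_congr rfl fun m _ => ?_
  ring

lemma opC_at (q : Polynomial ℂ) (d : ℕ) (hd : q.natDegree ≤ d) :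
    opC q d = C (q.coeff d) * X ^ d := by
  unfold opC
  rcases Nat.lt_or_ge q.natDegree d with h | h
  · rw [Finset.sum_eq_zero, Polynomial.coeff_eq_zero_of_natDegree_lt h]
    · simp
    · intro m hm
      simp only [Finset.mem_range] at hm
      rw [th_support m d (by omega)]
      simp
  · have hqd : q.natDegree = d := by omega
    subst hqd
    rw [Finset.sum_range_succ, Finset.sum_eq_zero, th_top]
    · simp
    · intro m hm
      simp only [Finset.mem_range] at hm
      rw [th_support m q.natDegree (by omega)]
      simp

variable {F : Subfield ℂ}

def PF (F : Subfield ℂ) (q : Polynomial ℂ) : Prop := ∀ k, q.coeff k ∈ F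

lemma PF_zero : PF F 0 := fun k => by simp
lemma PF_one : PF F 1 := fun k => by
  rw [Polynomial.coeff_one]
  split <;> simp [one_mem, zero_mem]
lemma PF_add {p q : Polynomial ℂ} (hp : PF F p) (hq : PF F q) : PF F (p + q) := fun k => by
  rw [Polynomial.coeff_add]; exact add_mem (hp k) (hq k)
lemma PF_sub {p q : Polynomial ℂ} (hp : PF F p) (hq : PF F q) : PF F (p - q) := fun k => by
  rw [Polynomial.coeff_sub]; exact sub_mem (hp k) (hq k)
lemma PF_mul {p q : Polynomial ℂ} (hp : PF F p) (hq : PF F q) : PF F (p * q) := fun k => by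
  rw [Polynomial.coeff_mul]
  exact Subfield.sum_mem F fun c _ => mul_mem (hp c.1) (hq c.2)
lemma PF_C {a : ℂ} (ha : a ∈ F) : PF F (C a) := fun k => by
  rw [Polynomial.coeff_C]; split <;> simp [ha, zero_mem]
lemma PF_X : PF F X := fun k => by
  rw [Polynomial.coeff_X]; split <;> simp [one_mem, zero_mem]
lemma PF_pow {p : Polynomial ℂ} (hp : PF F p) (n : ℕ) : PF F (p ^ n) := by
  induction n with
  | zero => simpa [pow_zero] using PF_one
  | succ n ih => rw [pow_succ]; exact PF_mul ih hp
lemma PF_sum {ι : Type*} (u : Finset ι) (g : ι → Polynomial ℂ) (hg : ∀ i ∈ u, PF F (g i)) :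
    PF F (∑ i ∈ u, g i) := fun k => by
  rw [Polynomial.finset_sum_coeff]
  exact Subfield.sum_mem F fun i hi => hg i hi k
lemma PF_derivative {p : Polynomial ℂ} (hp : PF F p) : PF F (derivative p) := fun k => by
  rw [Polynomial.coeff_derivative]
  exact mul_mem (hp (k+1)) (by
    have : ((k : ℂ) + 1) = ((k + 1 : ℕ) : ℂ) := by push_cast; ring
    rw [this]; exact natCast_mem F _)
lemma PF_natCast (n : ℕ) : PF F ((n : Polynomial ℂ)) := by
  have : ((n : Polynomial ℂ)) = C (n : ℂ) := by push_cast; rfl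
  rw [this]; exact PF_C (natCast_mem F n)
lemma PF_comp {p u : Polynomial ℂ} (hp : PF F p) (hu : PF F u) : PF F (p.comp u) := by
  rw [Polynomial.comp_eq_sum_left]
  rw [Polynomial.sum_def]
  exact PF_sum _ _ fun m _ => PF_mul (PF_C (hp m)) (PF_pow hu m)
lemma PF_Dop {c : ℕ → Polynomial ℂ} (hc : ∀ k, PF F (c k)) : ∀ k, PF F (Dop c k) := by
  intro k
  unfold Dop
  refine PF_add ?_ (PF_derivative (hc k))
  split
  · exact PF_zero
  · exact hc _
lemma PF_DopIter {c : ℕ → Polynomial ℂ} (hc : ∀ k, PF F (c k)) (r : ℕ) :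
    ∀ k, PF F (Dop^[r] c k) := by
  induction r with
  | zero => simpa using hc
  | succ r ih => rw [Function.iterate_succ_apply']; exact PF_Dop ih
lemma PF_th (m : ℕ) : ∀ k, PF F (th m k) := by
  induction m with
  | zero =>
    intro k
    simp only [th]
    split
    · exact PF_one
    · exact PF_zero
  | succ m ih =>
    intro k
    simp only [th]
    exact PF_mul PF_X (PF_Dop ih k)
lemma PF_opC {q : Polynomial ℂ} (hq : PF F q) : ∀ k, PF F (opC q k) := by
  intro k
  exact PF_sum _ _ fun m _ => PF_mul (PF_C (hq m)) (PF_th m k)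

lemma Dc_iter_eq_zero (r : ℕ) (g : PowerSeries ℂ)
    (hg : ∀ N, r ≤ N → PowerSeries.coeff N g = 0) : Dc^[r] g = 0 := by
  induction r generalizing g with
  | zero =>
    ext N
    simpa using hg N (by omega)
  | succ r ih =>
    rw [Function.iterate_succ_apply]
    refine ih _ fun N hN => ?_
    simp only [Dc, PowerSeries.coeff_derivative]
    rw [hg (N + 1) (by omega)]
    ring

lemma final_sum_eq_app (c : ℕ → Polynomial ℂ) (s : ℕ) (f : PowerSeries ℂ) :
    ∑ j : Fin (s + 1),
      Polynomial.coeToPowerSeries.ringHom (c (j : ℕ)) *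
        (((PowerSeries.derivative ℂ).toLinearMap ^ (j : ℕ)) f) = app c s f := by
  rw [Fin.sum_univ_eq_sum_range (fun j =>
    Polynomial.coeToPowerSeries.ringHom (c j) *
      (((PowerSeries.derivative ℂ).toLinearMap ^ j) f))]
  unfold app
  refine Finset.sum_congr rfl fun k _ => ?_
  rw [Polynomial.coeToPowerSeries.ringHom_apply, Module.End.pow_apply]
  rfl

end DFAux


open DFAux in
lemma dfinite_of_precursive (F : Subfield ℂ) (b : ℕ → ℂ)
    (hb : IsPRecursiveOver F b) : IsDFiniteSeries F (PowerSeries.mk b) := by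
  obtain ⟨r, p, hpF, hpl, hrec⟩ := hb
  set q : Fin (r + 1) → Polynomial ℂ := fun j => (p j).comp (X - C ((j : ℕ) : ℂ)) with hq
  have hqeval : ∀ (j : Fin (r + 1)) (x : ℂ), (q j).eval x = (p j).eval (x - (j : ℕ)) := by
    intro j x
    simp [hq, Polynomial.eval_comp]
  have hqF : ∀ j, PF F (q j) := fun j =>
    PF_comp (hpF j) (PF_sub PF_X (PF_C (natCast_mem F _)))
  have hql : q (Fin.last r) ≠ 0 := by
    intro hcon
    apply hpl
    have h2 : ((p (Fin.last r)).comp (X - C ((Fin.last r : ℕ) : ℂ))).comp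
        (X + C ((Fin.last r : ℕ) : ℂ)) = 0 := by
      rw [show ((p (Fin.last r)).comp (X - C ((Fin.last r : ℕ) : ℂ))) = q (Fin.last r) from rfl,
        hcon]
      simp
    rwa [Polynomial.comp_assoc, Polynomial.sub_comp, Polynomial.X_comp, Polynomial.C_comp,
      add_sub_cancel_right, Polynomial.comp_X] at h2
  set d : ℕ := Finset.univ.sup (fun j => (q j).natDegree) with hd
  have hdle : ∀ j, (q j).natDegree ≤ d := fun j => by rw [hd]; exact Finset.le_sup (f := fun j => (q j).natDegree) (Finset.mem_univ j)
  set inner : ℕ → Polynomial ℂ := fun k => ∑ j : Fin (r + 1), X ^ (r - (j : ℕ)) * opC (q j) k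
    with hinner
  have hinnersupp : ∀ k, d < k → inner k = 0 := by
    intro k hk
    simp only [hinner]
    refine Finset.sum_eq_zero fun j _ => ?_
    rw [opC_support (q j) k (by have := hdle j; omega)]
    simp
  set final : ℕ → Polynomial ℂ := Dop^[r] inner with hfinal
  refine ⟨d + r, fun j => final (j : ℕ), ?_, ?_, ?_⟩
  · -- coefficients in F
    intro j k
    refine PF_DopIter (fun k' => ?_) r (j : ℕ) k
    exact PF_sum _ _ fun i _ => PF_mul (PF_pow PF_X _) (PF_opC (hqF i) k')
  · -- leading nonzero
    have htop : final ((Fin.last (d + r) : ℕ)) = inner d := by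
      rw [Fin.val_last, hfinal, DopIter_top r inner d hinnersupp]
    show final ((Fin.last (d + r) : ℕ)) ≠ 0
    rw [htop]
    -- inner d = ∑ j, C ((q j).coeff d) * X ^ (r - j + d)
    have hinnerd : inner d = ∑ j : Fin (r + 1), C ((q j).coeff d) * X ^ (r - (j : ℕ) + d) := by
      simp only [hinner]
      refine Finset.sum_congr rfl fun j _ => ?_
      rw [opC_at (q j) d (hdle j), pow_add]
      ring
    -- find j0 with coefficient nonzero
    have hex : ∃ j0 : Fin (r + 1), (q j0).coeff d ≠ 0 := by
      obtain ⟨j1, -, hj1⟩ := Finset.exists_mem_eq_sup Finset.univ Finset.univ_nonempty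
        (fun j => (q j).natDegree)
      by_cases hq1 : q j1 = 0
      · have hd0 : d = 0 := by rw [hd, hj1, hq1, Polynomial.natDegree_zero]
        refine ⟨Fin.last r, ?_⟩
        rw [hd0]
        intro hcon
        apply hql
        have := Polynomial.eq_C_of_natDegree_le_zero (le_trans (hdle (Fin.last r)) (le_of_eq hd0))
        rw [this, hcon, map_zero]
      · refine ⟨j1, ?_⟩
        rw [hd, hj1]
        rw [Polynomial.coeff_natDegree]
        exact fun hcon => hq1 (Polynomial.leadingCoeff_eq_zero.1 hcon)
    obtain ⟨j0, hj0⟩ := hex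
    intro hcon
    apply hj0
    have := congrArg (fun P => P.coeff (r - (j0 : ℕ) + d)) (hinnerd ▸ hcon)
    simp only [Polynomial.finset_sum_coeff, Polynomial.coeff_zero] at this
    rw [Finset.sum_eq_single j0] at this
    · rwa [Polynomial.coeff_C_mul, Polynomial.coeff_X_pow, if_pos rfl, mul_one] at this
    · intro j _ hjne
      rw [Polynomial.coeff_C_mul, Polynomial.coeff_X_pow, if_neg, mul_zero]
      intro he
      apply hjne
      have h1 := j.isLt
      have h2 := j0.isLt
      exact Fin.ext (by omega)
    · intro hcon2
      exact absurd (Finset.mem_univ j0) hcon2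
  · -- the differential equation
    rw [final_sum_eq_app]
    have h1 : app final (d + r) (PowerSeries.mk b) = Dc^[r] (app inner d (PowerSeries.mk b)) := by
      rw [hfinal, app_DopIter r inner d hinnersupp]
    rw [h1]
    have h2 : app inner d (PowerSeries.mk b)
        = ∑ j : Fin (r + 1), (PowerSeries.X : PowerSeries ℂ) ^ (r - (j : ℕ)) *
            PowerSeries.mk (fun n => (q j).eval (n : ℂ) * b n) := by
      simp only [hinner]
      rw [app_sum]
      refine Finset.sum_congr rfl fun j _ => ?_
      rw [app_constMul, opC_app (q j) d (hdle j), Polynomial.coe_pow, Polynomial.coe_X]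
    rw [h2]
    refine Dc_iter_eq_zero r _ fun N hN => ?_
    rw [map_sum]
    have h3 : ∀ j : Fin (r + 1),
        (PowerSeries.coeff N) ((PowerSeries.X : PowerSeries ℂ) ^ (r - (j : ℕ)) *
          PowerSeries.mk (fun n => (q j).eval (n : ℂ) * b n))
        = (p j).eval ((N - r : ℕ) : ℂ) * b ((N - r) + (j : ℕ)) := by
      intro j
      have hjr : (j : ℕ) ≤ r := by have := j.isLt; omega
      have hNj : N = (N - (r - (j : ℕ))) + (r - (j : ℕ)) := by omega
      conv_lhs => rw [hNj]
      rw [PowerSeries.coeff_X_pow_mul]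
      rw [PowerSeries.coeff_mk]
      have hidx : N - (r - (j : ℕ)) = (N - r) + (j : ℕ) := by omega
      rw [hidx, hqeval]
      congr 2
      push_cast
      ring
    rw [Finset.sum_congr rfl fun j _ => h3 j]
    exact hrec (N - r)

open DFAux in
lemma comp_shift_ne_zero (u : Polynomial ℂ) (c : ℂ) (hu : u ≠ 0) : u.comp (X + C c) ≠ 0 := by
  intro h
  apply hu
  have h2 : (u.comp (X + C c)).comp (X - C c) = 0 := by rw [h]; simp
  rwa [Polynomial.comp_assoc, Polynomial.add_comp, Polynomial.X_comp, Polynomial.C_comp,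
    sub_add_cancel, Polynomial.comp_X] at h2

open DFAux in
lemma precursive_diff (F : Subfield ℂ) (a b : ℕ → ℂ) (hb0 : b 0 = a 0)
    (hbs : ∀ n, b (n + 1) = a (n + 1) - a n) (ha : IsPRecursiveOver F a) :
    IsPRecursiveOver F b := by
  obtain ⟨r, p, hpF, hpl, hrec⟩ := ha
  set p' : ℕ → Polynomial ℂ := fun j => if h : j < r + 1 then p ⟨j, h⟩ else 0 with hp'
  have hp'F : ∀ j, PF F (p' j) := by
    intro j
    rw [hp']
    dsimp only
    split
    · exact hpF _
    · exact PF_zero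
  have hrec' : ∀ n : ℕ, ∑ j ∈ Finset.range (r + 1), (p' j).eval (n : ℂ) * a (n + j) = 0 := by
    intro n
    rw [← Fin.sum_univ_eq_sum_range (fun j => (p' j).eval (n : ℂ) * a (n + j))]
    rw [← hrec n]
    refine Finset.sum_congr rfl fun j _ => ?_
    rw [hp']
    simp [j.isLt]
  set t : ℕ → Polynomial ℂ := fun i => ∑ j ∈ Finset.Ico i (r + 1), p' j with ht
  have htF : ∀ i, PF F (t i) := fun i => PF_sum _ _ fun j _ => hp'F j
  have ht_top : t (r + 1) = 0 := by rw [ht]; simp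
  have ht_r : t r = p (Fin.last r) := by
    rw [ht]
    dsimp only
    rw [Nat.Ico_succ_singleton, Finset.sum_singleton, hp']
    simp only [Nat.lt_succ_self, dif_pos]
    rfl
  have hteval : ∀ (i : ℕ) (x : ℂ), (t i).eval x = ∑ j ∈ Finset.Ico i (r + 1), (p' j).eval x := by
    intro i x
    rw [ht]
    exact Polynomial.eval_finset_sum _ _ _
  have hA : ∀ n j, a (n + j) = a n + ∑ i ∈ Finset.range j, b (n + 1 + i) := by
    intro n j
    induction j with
    | zero => simp
    | succ j ih =>
      rw [Finset.sum_range_succ, show n + (j + 1) = n + j + 1 by omega,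
        show n + 1 + j = n + j + 1 by omega]
      linear_combination ih - hbs (n + j)
  have E1 : ∀ n : ℕ, (t 0).eval (n : ℂ) * a n
      + ∑ i ∈ Finset.range r, (t (i + 1)).eval (n : ℂ) * b (n + 1 + i) = 0 := by
    intro n
    rw [← hrec' n]
    have expand : ∀ j ∈ Finset.range (r + 1), (p' j).eval (n : ℂ) * a (n + j)
        = (p' j).eval (n : ℂ) * a n
          + ∑ i ∈ Finset.range j, (p' j).eval (n : ℂ) * b (n + 1 + i) := by
      intro j _
      rw [hA n j, mul_add, Finset.mul_sum]
    rw [Finset.sum_congr rfl expand, Finset.sum_add_distrib]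
    congr 1
    · rw [hteval, ← Finset.sum_mul, Nat.Ico_zero_eq_range]
    · rw [Finset.sum_comm' (t' := Finset.range r)
        (s' := fun i => Finset.Ico (i + 1) (r + 1)) ?_]
      · refine Finset.sum_congr rfl fun i _ => ?_
        rw [hteval, Finset.sum_mul]
      · intro j i
        simp only [Finset.mem_range, Finset.mem_Ico]
        omega
  by_cases hs : t 0 = 0
  · -- degenerate case
    have hr1 : 1 ≤ r := by
      by_contra hcon
      have hr0 : r = 0 := by omega
      apply hpl
      subst hr0
      rw [← ht_r]
      exact hs
    obtain ⟨r', rfl⟩ : ∃ r', r = r' + 1 := ⟨r - 1, by omega⟩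
    have E1' : ∀ n : ℕ, ∑ i ∈ Finset.range (r' + 1),
        (t (i + 1)).eval (n : ℂ) * b (n + 1 + i) = 0 := by
      intro n
      have h := E1 n
      rwa [hs, Polynomial.eval_zero, zero_mul, zero_add] at h
    refine ⟨r', fun i => X * ((t ((i : ℕ) + 1)).comp (X + C (-1))), ?_, ?_, ?_⟩
    · intro j k
      exact PF_mul PF_X (PF_comp (htF _) (PF_add PF_X (PF_C (neg_mem (one_mem F))))) k
    · simp only [Fin.val_last]
      refine mul_ne_zero Polynomial.X_ne_zero (comp_shift_ne_zero _ _ ?_)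
      rw [ht_r]
      exact hpl
    · intro n
      refine Eq.trans (Fin.sum_univ_eq_sum_range
        (fun i => (X * ((t (i + 1)).comp (X + C (-1)))).eval (n : ℂ) * b (n + i)) (r' + 1)) ?_
      cases n with
      | zero =>
        refine Finset.sum_eq_zero fun i _ => ?_
        simp
      | succ m =>
        have hterm : ∀ i ∈ Finset.range (r' + 1),
            (X * ((t (i + 1)).comp (X + C (-1)))).eval ((m + 1 : ℕ) : ℂ) * b (m + 1 + i)
              = ((m : ℂ) + 1) * ((t (i + 1)).eval (m : ℂ) * b (m + 1 + i)) := by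
          intro i _
          rw [Polynomial.eval_mul, Polynomial.eval_comp, Polynomial.eval_add,
            Polynomial.eval_X, Polynomial.eval_C]
          push_cast
          ring_nf
        rw [Finset.sum_congr rfl hterm, ← Finset.mul_sum, E1' m, mul_zero]
  · -- main case
    refine ⟨r + 1, fun i => if (i : ℕ) = 0 then 0 else
      (t 0).comp (X + C 1) * t (i : ℕ) - t 0 * ((t ((i : ℕ) - 1)).comp (X + C 1)), ?_, ?_, ?_⟩
    · intro j k
      dsimp only
      split
      · exact PF_zero k
      · exact PF_sub
          (PF_mul (PF_comp (htF _) (PF_add PF_X (PF_C (one_mem F)))) (htF _))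
          (PF_mul (htF _) (PF_comp (htF _) (PF_add PF_X (PF_C (one_mem F))))) k
    · simp only [Fin.val_last]
      rw [if_neg (by omega), Nat.add_sub_cancel, ht_top, mul_zero, zero_sub, neg_ne_zero]
      refine mul_ne_zero hs (comp_shift_ne_zero _ _ ?_)
      rw [ht_r]
      exact hpl
    · intro n
      refine Eq.trans (Fin.sum_univ_eq_sum_range (fun i => (if i = 0 then 0 else
        (t 0).comp (X + C 1) * t i - t 0 * ((t (i - 1)).comp (X + C 1))).eval (n : ℂ)
          * b (n + i)) (r + 2)) ?_
      rw [Finset.sum_range_succ' _ (r + 1)]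
      rw [if_pos rfl]
      rw [Polynomial.eval_zero, zero_mul, add_zero]
      have hterm : ∀ i ∈ Finset.range (r + 1),
          (if i + 1 = 0 then 0 else
              (t 0).comp (X + C 1) * t (i + 1) - t 0 * ((t (i + 1 - 1)).comp (X + C 1))).eval (n : ℂ)
              * b (n + (i + 1))
            = (t 0).eval ((n : ℂ) + 1) * ((t (i + 1)).eval (n : ℂ) * b (n + 1 + i))
              - (t 0).eval (n : ℂ) * ((t i).eval ((n : ℂ) + 1) * b (n + 1 + i)) := by
        intro i _
        rw [if_neg (Nat.succ_ne_zero i), Nat.add_sub_cancel]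
        rw [show n + (i + 1) = n + 1 + i by omega, Polynomial.eval_sub, Polynomial.eval_mul,
          Polynomial.eval_mul, Polynomial.eval_comp, Polynomial.eval_comp, Polynomial.eval_add,
          Polynomial.eval_X, Polynomial.eval_C]
        ring
      rw [Finset.sum_congr rfl hterm, Finset.sum_sub_distrib, ← Finset.mul_sum, ← Finset.mul_sum]
      -- first inner sum
      rw [Finset.sum_range_succ _ r, ht_top, Polynomial.eval_zero, zero_mul, add_zero]
      -- second inner sum
      rw [Finset.sum_range_succ' (fun i => (t i).eval ((n : ℂ) + 1) * b (n + 1 + i)) r]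
      have h1 := E1 n
      have h2 := E1 (n + 1)
      push_cast at h2
      have hre : ∀ i ∈ Finset.range r,
          (t (i + 1)).eval ((n : ℂ) + 1) * b (n + 1 + (i + 1))
            = (t (i + 1)).eval ((n : ℂ) + 1) * b (n + 1 + 1 + i) := by
        intro i _
        rw [show n + 1 + (i + 1) = n + 1 + 1 + i by omega]
      rw [Finset.sum_congr rfl hre]
      have hb := hbs n
      rw [show n + 1 + 0 = n + 1 by omega]
      linear_combination (t 0).eval ((n : ℂ) + 1) * h1 - (t 0).eval (n : ℂ) * h2
        - (t 0).eval (n : ℂ) * (t 0).eval ((n : ℂ) + 1) * hb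

theorem dfiniteNum_as_limit_at_one (R : Subring ℂ) (F : Subfield ℂ) (ξ : ℂ)
    (h : DFiniteNum R F ξ) :
    ∃ b : ℕ → ℂ, (∀ n, b n ∈ R) ∧ IsDFiniteSeries F (PowerSeries.mk b) ∧
      (∀ z : ℂ, ‖z‖ < 1 → Summable (fun n => b n * z ^ n)) ∧
      Tendsto (fun x : ℝ => ∑' n : ℕ, b n * (x : ℂ) ^ n)
        (𝓝[<] (1 : ℝ)) (𝓝 ξ) := by
  obtain ⟨a, haR, haP, halim⟩ := h
  set b : ℕ → ℂ := fun n => match n with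
    | 0 => a 0
    | (n + 1) => a (n + 1) - a n with hbdef
  have hb0 : b 0 = a 0 := rfl
  have hbs : ∀ n, b (n + 1) = a (n + 1) - a n := fun n => rfl
  refine ⟨b, ?_, ?_, ?_, ?_⟩
  · intro n
    cases n with
    | zero => exact haR 0
    | succ n => exact sub_mem (haR (n + 1)) (haR n)
  · exact dfinite_of_precursive F b (precursive_diff F a b hb0 hbs haP)
  · -- summability
    intro z hz
    obtain ⟨M, hM⟩ := (halim.norm.bddAbove_range)
    have hMub : ∀ n, ‖a n‖ ≤ M := fun n => hM (Set.mem_range_self n)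
    refine Summable.of_norm_bounded (g := fun n => (2 * M) * ‖z‖ ^ n)
      (Summable.mul_left _ (summable_geometric_of_lt_one (norm_nonneg z) hz)) ?_
    intro n
    rw [norm_mul, norm_pow]
    have hb : ‖b n‖ ≤ 2 * M := by
      cases n with
      | zero =>
        have h0 := hMub 0
        have : (0 : ℝ) ≤ ‖a 0‖ := norm_nonneg _
        rw [hb0]
        linarith
      | succ n =>
        rw [hbs]
        calc ‖a (n + 1) - a n‖ ≤ ‖a (n + 1)‖ + ‖a n‖ := norm_sub_le _ _
          _ ≤ 2 * M := by have := hMub (n + 1); have := hMub n; linarith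
    exact mul_le_mul_of_nonneg_right hb (pow_nonneg (norm_nonneg z) n)
  · -- Abel limit
    have hps : ∀ n, ∑ i ∈ Finset.range (n + 1), b i = a n := by
      intro n
      induction n with
      | zero => simpa using hb0
      | succ n ih =>
        rw [Finset.sum_range_succ, ih, hbs]
        ring
    have h1 : Tendsto (fun n => ∑ i ∈ Finset.range (n + 1), b i) atTop (𝓝 ξ) :=
      (Filter.tendsto_congr fun n => (hps n).symm).1 halim
    have h2 : Tendsto (fun n => ∑ i ∈ Finset.range n, b i) atTop (𝓝 ξ) :=
      (Filter.tendsto_add_atTop_iff_nat 1).1 h1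
    have habel := Complex.tendsto_tsum_powerSeries_nhdsWithin_lt h2
    exact habel.comp Filter.tendsto_map
end

section
/- Let f(z) = Σ a_n z^n be a power series with coefficients in a subring R of ℂ, D-finite over a subfield F of ℂ, and convergent on a disk of radius ρ > 0 about 0. If ζ ∈ R ∩ F with |ζ| < ρ, then f(ζ) ∈ D_{R,F}, i.e., f(ζ) is the limit of a convergent P-recursive sequence over F with terms in R. -/
open Filter Topology Polynomial Finset

noncomputable def pAux (r D : ℕ) (q : Fin (r+1) → Polynomial ℂ) (t : ℕ) : Polynomial ℂ :=
  ∑ j : Fin (r+1), if t ≤ D + (j : ℕ) then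
    Polynomial.C ((q j).coeff (D + (j:ℕ) - t)) *
      ∏ i ∈ Finset.range (j:ℕ), (Polynomial.X + Polynomial.C (((t - (j:ℕ) + i + 1 : ℕ) : ℂ)))
  else 0

lemma coeff_derivative_pow (j : ℕ) : ∀ (a : ℕ → ℂ) (m : ℕ),
    PowerSeries.coeff m (((PowerSeries.derivative ℂ).toLinearMap ^ j) (PowerSeries.mk a))
      = (∏ i ∈ Finset.range j, ((m : ℂ) + i + 1)) * a (m + j) := by
  induction j with
  | zero => intro a m; simp
  | succ j ih =>
    intro a m
    have h1 : ((PowerSeries.derivative ℂ).toLinearMap ^ (j+1)) (PowerSeries.mk a)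
        = ((PowerSeries.derivative ℂ).toLinearMap ^ j)
            (PowerSeries.mk (fun m => a (m+1) * ((m : ℂ) + 1))) := by
      rw [pow_succ, Module.End.mul_apply]
      congr 1
      ext k
      simp [PowerSeries.coeff_derivative, PowerSeries.coeff_mk]
    rw [h1, ih]
    rw [Finset.prod_range_succ]
    push_cast
    ring_nf

lemma claimA (r D : ℕ) (q : Fin (r+1) → Polynomial ℂ) (hD : ∀ j, (q j).natDegree ≤ D)
    (a : ℕ → ℂ)
    (hode : ∑ j : Fin (r + 1), Polynomial.coeToPowerSeries.ringHom (q j) *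
        (((PowerSeries.derivative ℂ).toLinearMap ^ (j : ℕ)) (PowerSeries.mk a)) = 0)
    (n : ℕ) :
    ∑ t ∈ Finset.range (D + r + 1), (pAux r D q t).eval (n : ℂ) * a (n + t) = 0 := by
  have h0 : (PowerSeries.coeff (n + D)) (∑ j : Fin (r + 1),
      Polynomial.coeToPowerSeries.ringHom (q j) *
        (((PowerSeries.derivative ℂ).toLinearMap ^ (j : ℕ)) (PowerSeries.mk a))) = 0 := by
    rw [hode]; simp
  rw [map_sum] at h0
  -- per-j common form
  set B : Fin (r+1) → ℕ → ℂ := fun j k =>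
    (q j).coeff (D - k) * ((∏ i ∈ Finset.range (j:ℕ), (((n + k : ℕ) : ℂ) + i + 1)) * a (n + k + (j:ℕ)))
    with hB
  -- RHS per j
  have hR : ∀ j : Fin (r+1), (PowerSeries.coeff (n + D))
      (Polynomial.coeToPowerSeries.ringHom (q j) *
        (((PowerSeries.derivative ℂ).toLinearMap ^ (j : ℕ)) (PowerSeries.mk a)))
      = ∑ k ∈ Finset.range (D + 1), B j k := by
    intro j
    rw [Polynomial.coeToPowerSeries.ringHom_apply, PowerSeries.coeff_mul,
      Finset.Nat.sum_antidiagonal_eq_sum_range_succ_mk]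
    have hsub : Finset.range (D + 1) ⊆ Finset.range (n + D + 1) := by
      intro x hx; simp only [Finset.mem_range] at *; omega
    rw [← Finset.sum_subset hsub (by
      intro x hx hxn
      simp only [Finset.mem_range] at hx hxn
      have : (q j).coeff x = 0 :=
        Polynomial.coeff_eq_zero_of_natDegree_lt (lt_of_le_of_lt (hD j) (by omega))
      rw [Polynomial.coeff_coe, this, zero_mul])]
    refine Finset.sum_nbij' (i := fun k => D - k) (j := fun k => D - k)
      (fun k hk => ?_) (fun k hk => ?_) (fun k hk => ?_) (fun k hk => ?_) (fun k hk => ?_)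
    · simp only [Finset.mem_range] at *; omega
    · simp only [Finset.mem_range] at *; omega
    · simp only [Finset.mem_range] at hk; omega
    · simp only [Finset.mem_range] at hk; omega
    · simp only [Finset.mem_range] at hk
      simp only [hB]
      rw [Polynomial.coeff_coe, coeff_derivative_pow,
        show D - (D - k) = k from by omega,
        show n + D - k = n + (D - k) from by omega]
  -- LHS per j
  have hL : ∀ j : Fin (r+1),
      ∑ t ∈ Finset.range (D + r + 1),
        (if t ≤ D + (j:ℕ) then
          Polynomial.C ((q j).coeff (D + (j:ℕ) - t)) *
            ∏ i ∈ Finset.range (j:ℕ), (Polynomial.X + Polynomial.C (((t - (j:ℕ) + i + 1 : ℕ) : ℂ)))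
        else 0).eval (n : ℂ) * a (n + t)
      = ∑ k ∈ Finset.range (D + 1), B j k := by
    intro j
    have hsub : Finset.Ico (j:ℕ) (D + (j:ℕ) + 1) ⊆ Finset.range (D + r + 1) := by
      intro x hx
      simp only [Finset.mem_Ico, Finset.mem_range] at *
      omega
    rw [← Finset.sum_subset hsub (by
      intro t ht htn
      simp only [Finset.mem_Ico, Finset.mem_range] at ht htn
      rcases Nat.lt_or_ge t (j:ℕ) with h | h
      · rw [if_pos (by omega)]
        have : (q j).coeff (D + (j:ℕ) - t) = 0 :=
          Polynomial.coeff_eq_zero_of_natDegree_lt (lt_of_le_of_lt (hD j) (by omega))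
        rw [this]
        simp
      · rw [if_neg (by omega)]
        simp)]
    rw [Finset.sum_Ico_eq_sum_range,
      show D + (j:ℕ) + 1 - (j:ℕ) = D + 1 from by omega]
    refine Finset.sum_congr rfl (fun k hk => ?_)
    simp only [Finset.mem_range] at hk
    rw [if_pos (by omega)]
    simp only [hB, Polynomial.eval_mul, Polynomial.eval_C, Polynomial.eval_prod,
      Polynomial.eval_add, Polynomial.eval_X]
    rw [show D + (j:ℕ) - ((j:ℕ) + k) = D - k from by omega,
      show (j:ℕ) + k - (j:ℕ) = k from by omega,
      show n + ((j:ℕ) + k) = n + k + (j:ℕ) from by omega]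
    have hprod : ∏ i ∈ Finset.range (j:ℕ), ((n:ℂ) + ((k + i + 1 : ℕ) : ℂ))
        = ∏ i ∈ Finset.range (j:ℕ), (((n + k : ℕ) : ℂ) + i + 1) :=
      Finset.prod_congr rfl (fun i _ => by push_cast; ring)
    rw [hprod]
    ring
  calc ∑ t ∈ Finset.range (D + r + 1), (pAux r D q t).eval (n : ℂ) * a (n + t)
      = ∑ t ∈ Finset.range (D + r + 1), ∑ j : Fin (r+1),
        (if t ≤ D + (j:ℕ) then
          Polynomial.C ((q j).coeff (D + (j:ℕ) - t)) *
            ∏ i ∈ Finset.range (j:ℕ), (Polynomial.X + Polynomial.C (((t - (j:ℕ) + i + 1 : ℕ) : ℂ)))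
        else 0).eval (n : ℂ) * a (n + t) := by
        refine Finset.sum_congr rfl (fun t _ => ?_)
        rw [pAux, Polynomial.eval_finset_sum, Finset.sum_mul]
    _ = ∑ j : Fin (r+1), ∑ t ∈ Finset.range (D + r + 1),
        (if t ≤ D + (j:ℕ) then
          Polynomial.C ((q j).coeff (D + (j:ℕ) - t)) *
            ∏ i ∈ Finset.range (j:ℕ), (Polynomial.X + Polynomial.C (((t - (j:ℕ) + i + 1 : ℕ) : ℂ)))
        else 0).eval (n : ℂ) * a (n + t) := Finset.sum_comm
    _ = ∑ j : Fin (r+1), ∑ k ∈ Finset.range (D + 1), B j k :=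
        Finset.sum_congr rfl (fun j _ => hL j)
    _ = 0 := by
        rw [← Finset.sum_congr rfl (fun j _ => hR j)] at *
        exact h0

noncomputable def polyF (F : Subfield ℂ) : Subring (Polynomial ℂ) where
  carrier := {p | ∀ k, p.coeff k ∈ F}
  zero_mem' := by intro k; simpa using zero_mem F
  one_mem' := by
    intro k; rw [Polynomial.coeff_one]
    split <;> [exact one_mem F; exact zero_mem F]
  add_mem' := by intro p q hp hq k; rw [Polynomial.coeff_add]; exact add_mem (hp k) (hq k)
  neg_mem' := by intro p hp k; rw [Polynomial.coeff_neg]; exact neg_mem (hp k)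
  mul_mem' := by
    intro p q hp hq k
    rw [Polynomial.coeff_mul]
    exact sum_mem (fun x _ => mul_mem (hp x.1) (hq x.2))

lemma X_mem_polyF (F : Subfield ℂ) : Polynomial.X ∈ polyF F := by
  intro k; rw [Polynomial.coeff_X]
  split <;> [exact one_mem F; exact zero_mem F]

lemma C_mem_polyF (F : Subfield ℂ) {c : ℂ} (hc : c ∈ F) : Polynomial.C c ∈ polyF F := by
  intro k; rw [Polynomial.coeff_C]
  split <;> [exact hc; exact zero_mem F]

lemma pAux_mem (F : Subfield ℂ) (r D : ℕ) (q : Fin (r+1) → Polynomial ℂ)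
    (hq : ∀ j k, (q j).coeff k ∈ F) (t : ℕ) : pAux r D q t ∈ polyF F := by
  refine sum_mem (fun j _ => ?_)
  split
  · exact mul_mem (C_mem_polyF F (hq j _))
      (prod_mem (fun i _ => add_mem (X_mem_polyF F) (C_mem_polyF F (natCast_mem F _))))
  · exact zero_mem _

lemma pAux_coeff_r (r D : ℕ) (q : Fin (r+1) → Polynomial ℂ) (hD : ∀ j, (q j).natDegree ≤ D)
    (k0 : ℕ) (hk0 : k0 ≤ D) :
    (pAux r D q (D + r - k0)).coeff r = (q (Fin.last r)).coeff k0 := by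
  rw [pAux, Polynomial.finset_sum_coeff]
  rw [Finset.sum_eq_single (Fin.last r)]
  · rw [if_pos (by simp only [Fin.val_last]; omega)]
    simp only [Fin.val_last]
    rw [show D + r - (D + r - k0) = k0 from by omega]
    set M : Polynomial ℂ := ∏ i ∈ Finset.range r,
      (Polynomial.X + Polynomial.C (((D + r - k0 - r + i + 1 : ℕ) : ℂ))) with hM
    have hmon : M.Monic := monic_prod_of_monic _ _ (fun i _ => monic_X_add_C _)
    have hdeg : M.natDegree = r := by
      rw [hM, Polynomial.natDegree_prod_of_monic _ _ (fun i _ => monic_X_add_C _),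
        Finset.sum_congr rfl (fun i _ => Polynomial.natDegree_X_add_C _)]
      simp
    have hc : M.coeff r = 1 := by rw [← hdeg]; exact hmon.coeff_natDegree
    rw [Polynomial.coeff_C_mul, hc, mul_one]
  · intro j _ hjne
    have hjr : (j : ℕ) < r := by
      have h1 : (j : ℕ) ≤ r := Nat.lt_succ_iff.mp j.isLt
      have h2 : (j : ℕ) ≠ r := fun h => hjne (Fin.ext (by simp [h]))
      omega
    split
    · refine Polynomial.coeff_eq_zero_of_natDegree_lt (lt_of_le_of_lt ?_ hjr)
      refine le_trans (Polynomial.natDegree_mul_le) ?_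
      rw [Polynomial.natDegree_C, zero_add]
      refine le_trans (Polynomial.natDegree_prod_le _ _) (le_of_eq ?_)
      rw [Finset.sum_congr rfl (fun i _ => Polynomial.natDegree_X_add_C _)]
      simp
    · simp
  · intro h
    exact absurd (Finset.mem_univ _) h

theorem dfinite_eval_in_disk (R : Subring ℂ) (F : Subfield ℂ) (a : ℕ → ℂ)
    (ha : ∀ n, a n ∈ R) (hdf : IsDFiniteSeries F (PowerSeries.mk a))
    (ρ : ℝ) (hρ : 0 < ρ)
    (hconv : ∀ z : ℂ, ‖z‖ < ρ → Summable (fun n => a n * z ^ n))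
    (ζ : ℂ) (hζR : ζ ∈ R) (hζF : ζ ∈ F) (hζ : ‖ζ‖ < ρ) :
    DFiniteNum R F (∑' n : ℕ, a n * ζ ^ n) := by
  classical
  obtain ⟨r, q, hqF, hqne, hode⟩ := hdf
  set D := Finset.univ.sup (fun j : Fin (r+1) => (q j).natDegree) with hDdef
  have hD : ∀ j, (q j).natDegree ≤ D := fun j => by simpa using Finset.le_sup (f := fun j : Fin (r+1) => (q j).natDegree) (Finset.mem_univ j)
  set p : ℕ → Polynomial ℂ := pAux r D q with hpdef
  have hpF : ∀ t k, (p t).coeff k ∈ F := fun t k => pAux_mem F r D q hqF t k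
  have key : ∀ n : ℕ, ∑ t ∈ Finset.range (D + r + 1), (p t).eval (n:ℂ) * a (n + t) = 0 :=
    claimA r D q hD a hode
  set k0 := (q (Fin.last r)).natTrailingDegree with hk0def
  have hk0 : (q (Fin.last r)).coeff k0 ≠ 0 :=
    Polynomial.trailingCoeff_nonzero_iff_nonzero.mpr hqne
  have hk0D : k0 ≤ D := le_trans (Polynomial.natTrailingDegree_le_natDegree _) (hD _)
  have hstar : p (D + r - k0) ≠ 0 := fun h => by
    have := pAux_coeff_r r D q hD k0 hk0D
    rw [← hpdef, h] at this
    exact hk0 (by simpa using this.symm)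
  set tm := Nat.findGreatest (fun t => p t ≠ 0) (D + r) with htmdef
  have hle : D + r - k0 ≤ D + r := by omega
  have htmne : p tm ≠ 0 := by exact Nat.findGreatest_spec (P := fun t => p t ≠ 0) hle hstar
  have htmT : tm ≤ D + r := Nat.findGreatest_le (D + r)
  have hzero : ∀ t, tm < t → t ≤ D + r → p t = 0 := fun t h1 h2 =>
    not_not.mp (Nat.findGreatest_is_greatest (P := fun t => p t ≠ 0) h1 h2)
  have key' : ∀ n : ℕ, ∑ t ∈ Finset.range (tm + 1), (p t).eval (n:ℂ) * a (n + t) = 0 := by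
    intro n
    rw [Finset.sum_subset (Finset.range_subset_range.mpr (show tm + 1 ≤ D + r + 1 from by omega)) (fun t ht htn => by
      simp only [Finset.mem_range] at ht htn
      rw [hzero t (by omega) (by omega)]
      simp)]
    exact key n
  set Q : ℕ → Polynomial ℂ := fun t =>
    if t ≤ tm then Polynomial.C (ζ ^ (tm - t)) * p t else 0 with hQdef
  have hQF : ∀ t k, (Q t).coeff k ∈ F := by
    intro t k
    simp only [hQdef]
    split
    · rw [Polynomial.coeff_C_mul]
      exact mul_mem (pow_mem hζF _) (hpF _ k)
    · simpa using zero_mem F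
  have keyQ : ∀ n : ℕ,
      ∑ t ∈ Finset.range (tm + 1), (Q t).eval (n:ℂ) * (a (n + t) * ζ ^ (n + t)) = 0 := by
    intro n
    have hterm : ∀ t ∈ Finset.range (tm + 1),
        (Q t).eval (n:ℂ) * (a (n + t) * ζ ^ (n + t))
          = ((p t).eval (n:ℂ) * a (n + t)) * ζ ^ (n + tm) := by
      intro t ht
      simp only [Finset.mem_range] at ht
      simp only [hQdef]
      rw [if_pos (by omega), Polynomial.eval_mul, Polynomial.eval_C]
      have hζp : ζ ^ (tm - t) * ζ ^ (n + t) = ζ ^ (n + tm) := by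
        rw [← pow_add, show tm - t + (n + t) = n + tm from by omega]
      calc ζ ^ (tm - t) * (p t).eval (n:ℂ) * (a (n + t) * ζ ^ (n + t))
          = ((p t).eval (n:ℂ) * a (n + t)) * (ζ ^ (tm - t) * ζ ^ (n + t)) := by ring
        _ = ((p t).eval (n:ℂ) * a (n + t)) * ζ ^ (n + tm) := by rw [hζp]
    rw [Finset.sum_congr rfl hterm, ← Finset.sum_mul, key' n, zero_mul]
  have hQtop : Q (tm + 1) = 0 := by
    simp only [hQdef]
    rw [if_neg (show ¬ tm + 1 ≤ tm from by omega)]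
  have hQtm : Q tm = p tm := by
    simp only [hQdef]
    rw [if_pos le_rfl, Nat.sub_self, pow_zero, map_one, one_mul]
  set s : ℕ → ℂ := fun n => ∑ ℓ ∈ Finset.range n, a ℓ * ζ ^ ℓ with hsdef
  have hdiff : ∀ m : ℕ, s (m + 1) - s m = a m * ζ ^ m := by
    intro m
    rw [hsdef]
    simp only [Finset.sum_range_succ]
    ring
  refine ⟨s, fun n => sum_mem (fun ℓ _ => mul_mem (ha ℓ) (pow_mem hζR ℓ)), ?_,
    (hconv ζ hζ).hasSum.tendsto_sum_nat⟩
  set P : ℕ → Polynomial ℂ := fun j => (if j = 0 then 0 else Q (j - 1)) - Q j with hPdef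
  refine ⟨tm + 1, fun j => P (j : ℕ), ?_, ?_, ?_⟩
  · intro j k
    simp only [hPdef, Polynomial.coeff_sub]
    refine sub_mem ?_ (hQF _ _)
    split
    · simpa using zero_mem F
    · exact hQF _ _
  · simp only [Fin.val_last, hPdef]
    rw [if_neg (show ¬ tm + 1 = 0 from by omega), show tm + 1 - 1 = tm from rfl,
      hQtop, sub_zero, hQtm]
    exact htmne
  · intro n
    rw [Fin.sum_univ_eq_sum_range (fun j => (P j).eval (n:ℂ) * s (n + j)) (tm + 2)]
    have expand : ∀ j, (P j).eval (n:ℂ) * s (n + j)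
        = (if j = 0 then 0 else Q (j-1)).eval (n:ℂ) * s (n + j)
          - (Q j).eval (n:ℂ) * s (n + j) := by
      intro j
      rw [hPdef]
      simp only [Polynomial.eval_sub]
      ring
    rw [Finset.sum_congr rfl (fun j _ => expand j), Finset.sum_sub_distrib]
    rw [Finset.sum_range_succ' (fun j => (if j = 0 then 0 else Q (j-1)).eval (n:ℂ) * s (n + j)) (tm+1)]
    rw [Finset.sum_range_succ (fun j => (Q j).eval (n:ℂ) * s (n + j)) (tm+1)]
    rw [if_pos rfl, hQtop]
    simp only [Polynomial.eval_zero, zero_mul, add_zero]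
    have step : ∀ i ∈ Finset.range (tm+1),
        (if i + 1 = 0 then (0:Polynomial ℂ) else Q (i+1-1)).eval (n:ℂ) * s (n + (i+1))
          = (Q i).eval (n:ℂ) * s (n + i + 1) := by
      intro i _
      rw [if_neg (Nat.succ_ne_zero i), show i + 1 - 1 = i from rfl,
        show n + (i + 1) = n + i + 1 from rfl]
    rw [Finset.sum_congr rfl step, ← Finset.sum_sub_distrib]
    have final : ∀ i ∈ Finset.range (tm+1),
        (Q i).eval (n:ℂ) * s (n + i + 1) - (Q i).eval (n:ℂ) * s (n + i)
          = (Q i).eval (n:ℂ) * (a (n + i) * ζ ^ (n + i)) := by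
      intro i _
      rw [← mul_sub, hdiff (n + i)]
    rw [Finset.sum_congr rfl final]
    exact keyQ n
end

section
/- Let p(y) ∈ F[y] be an irreducible polynomial over a subfield F of ℂ with a root ζ₁ that either is real (if F ⊆ ℝ) or is arbitrary (if F contains a non-real element). Then there exists a polynomial P(z,y) ∈ F[z,y] and a formal power series f(z) ∈ F[[z]] with P(z,f(z)) = 0 such that the coefficient sequence of f converges to ζ₁: lim_{n→∞} [z^n] f(z) = ζ₁. -/
open Filter Topology Polynomial

set_option synthInstance.maxHeartbeats 1000000
set_option maxHeartbeats 1000000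

open scoped NNReal ENNReal

noncomputable section AuxConvRoot
namespace AuxConvRoot

/-- Polynomials with coefficients in a subring form a subring. -/
def polySub (R : Type*) [CommRing R] (S : Subring R) : Subring (Polynomial R) where
  carrier := {q | ∀ k, q.coeff k ∈ S}
  zero_mem' := fun k => by simp only [Polynomial.coeff_zero]; exact S.zero_mem
  one_mem' := fun k => by
    rw [Polynomial.coeff_one]; split
    · exact S.one_mem
    · exact S.zero_mem
  add_mem' := fun {a b} ha hb k => by
    rw [Polynomial.coeff_add]; exact S.add_mem (ha k) (hb k)
  neg_mem' := fun {a} ha k => by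
    rw [Polynomial.coeff_neg]; exact S.neg_mem (ha k)
  mul_mem' := fun {a b} ha hb k => by
    rw [Polynomial.coeff_mul]
    exact Subring.sum_mem _ fun kl _ => S.mul_mem (ha _) (hb _)

/-- Power series with coefficients in a subring form a subring. -/
def psSub (S : Subring ℂ) : Subring (PowerSeries ℂ) where
  carrier := {A | ∀ k, PowerSeries.coeff (R := ℂ) k A ∈ S}
  zero_mem' := fun k => by simp only [map_zero]; exact S.zero_mem
  one_mem' := fun k => by
    rw [PowerSeries.coeff_one]; split
    · exact S.one_mem
    · exact S.zero_mem
  add_mem' := fun {a b} ha hb k => by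
    rw [map_add]; exact S.add_mem (ha k) (hb k)
  neg_mem' := fun {a} ha k => by
    rw [map_neg]; exact S.neg_mem (ha k)
  mul_mem' := fun {a b} ha hb k => by
    rw [PowerSeries.coeff_mul]
    exact Subring.sum_mem _ fun kl _ => S.mul_mem (ha _) (hb _)

/-- `A` represents the function `s` on the open unit disk, with absolute convergence. -/
def Rep (A : PowerSeries ℂ) (s : ℂ → ℂ) : Prop :=
  ∀ z : ℂ, ‖z‖ < 1 → HasSum (fun n => PowerSeries.coeff (R := ℂ) n A * z ^ n) (s z) ∧
    Summable (fun n => ‖PowerSeries.coeff (R := ℂ) n A‖ * ‖z‖ ^ n)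

theorem rep_congr {A : PowerSeries ℂ} {s t : ℂ → ℂ} (h : Rep A s)
    (hst : ∀ z : ℂ, ‖z‖ < 1 → s z = t z) : Rep A t := by
  intro z hz
  refine ⟨?_, (h z hz).2⟩
  rw [← hst z hz]; exact (h z hz).1

theorem rep_add {A B : PowerSeries ℂ} {s t : ℂ → ℂ} (hA : Rep A s) (hB : Rep B t) :
    Rep (A + B) (fun z => s z + t z) := by
  intro z hz
  obtain ⟨h1, h2⟩ := hA z hz
  obtain ⟨h3, h4⟩ := hB z hz
  constructor
  · simpa [map_add, add_mul] using h1.add h3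
  · apply Summable.of_nonneg_of_le (fun n => by positivity) (fun n => ?_) (h2.add h4)
    rw [map_add]
    calc ‖PowerSeries.coeff (R := ℂ) n A + PowerSeries.coeff (R := ℂ) n B‖ * ‖z‖ ^ n
        ≤ (‖PowerSeries.coeff (R := ℂ) n A‖ + ‖PowerSeries.coeff (R := ℂ) n B‖) * ‖z‖ ^ n := by
          gcongr; exact norm_add_le _ _
      _ = ‖PowerSeries.coeff (R := ℂ) n A‖ * ‖z‖ ^ n + ‖PowerSeries.coeff (R := ℂ) n B‖ * ‖z‖ ^ n := by ring

theorem rep_mul {A B : PowerSeries ℂ} {s t : ℂ → ℂ} (hA : Rep A s) (hB : Rep B t) :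
    Rep (A * B) (fun z => s z * t z) := by
  intro z hz
  obtain ⟨h1, h2⟩ := hA z hz
  obtain ⟨h3, h4⟩ := hB z hz
  set f : ℕ → ℂ := fun n => PowerSeries.coeff (R := ℂ) n A * z ^ n with hf
  set g : ℕ → ℂ := fun n => PowerSeries.coeff (R := ℂ) n B * z ^ n with hg
  have hfn : Summable fun n => ‖f n‖ := by
    simpa [hf, norm_mul, norm_pow] using h2
  have hgn : Summable fun n => ‖g n‖ := by
    simpa [hg, norm_mul, norm_pow] using h4
  have key : ∀ n, ∑ kl ∈ Finset.HasAntidiagonal.antidiagonal n, f kl.1 * g kl.2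
      = PowerSeries.coeff (R := ℂ) n (A * B) * z ^ n := by
    intro n
    rw [PowerSeries.coeff_mul, Finset.sum_mul]
    refine Finset.sum_congr rfl fun kl hkl => ?_
    have hn : kl.1 + kl.2 = n := Finset.HasAntidiagonal.mem_antidiagonal.mp hkl
    rw [← hn, pow_add]; ring
  have hsummable : Summable fun n => PowerSeries.coeff (R := ℂ) n (A * B) * z ^ n := by
    have := summable_norm_sum_mul_antidiagonal_of_summable_norm hfn hgn
    simp_rw [key] at this
    exact this.of_norm
  constructor
  · rw [Summable.hasSum_iff hsummable]
    have hts := tsum_mul_tsum_eq_tsum_sum_antidiagonal_of_summable_norm hfn hgn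
    rw [h1.tsum_eq, h3.tsum_eq] at hts
    have hts2 : ∑' n, ∑ kl ∈ Finset.HasAntidiagonal.antidiagonal n, f kl.1 * g kl.2
        = ∑' n, PowerSeries.coeff (R := ℂ) n (A * B) * z ^ n := tsum_congr key
    rw [hts2] at hts
    exact hts.symm
  · -- absolute convergence of the product coefficients
    have habs : Summable fun n => ∑ kl ∈ Finset.HasAntidiagonal.antidiagonal n,
        (‖PowerSeries.coeff (R := ℂ) kl.1 A‖ * ‖z‖ ^ kl.1) * (‖PowerSeries.coeff (R := ℂ) kl.2 B‖ * ‖z‖ ^ kl.2) := by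
      have h2' : Summable fun n => ‖‖PowerSeries.coeff (R := ℂ) n A‖ * ‖z‖ ^ n‖ := by
        simpa [Real.norm_eq_abs, abs_of_nonneg, mul_nonneg, norm_nonneg, pow_nonneg] using h2
      have h4' : Summable fun n => ‖‖PowerSeries.coeff (R := ℂ) n B‖ * ‖z‖ ^ n‖ := by
        simpa [Real.norm_eq_abs, abs_of_nonneg, mul_nonneg, norm_nonneg, pow_nonneg] using h4
      have := summable_norm_sum_mul_antidiagonal_of_summable_norm h2' h4'
      refine this.congr fun n => ?_
      rw [Real.norm_eq_abs, abs_of_nonneg]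
      exact Finset.sum_nonneg fun kl _ => by positivity
    apply Summable.of_nonneg_of_le (fun n => by positivity) (fun n => ?_) habs
    calc ‖PowerSeries.coeff (R := ℂ) n (A * B)‖ * ‖z‖ ^ n
        = ‖PowerSeries.coeff (R := ℂ) n (A * B) * z ^ n‖ := by rw [norm_mul, norm_pow]
      _ = ‖∑ kl ∈ Finset.HasAntidiagonal.antidiagonal n, f kl.1 * g kl.2‖ := by rw [key]
      _ ≤ ∑ kl ∈ Finset.HasAntidiagonal.antidiagonal n, ‖f kl.1 * g kl.2‖ := norm_sum_le _ _
      _ = ∑ kl ∈ Finset.HasAntidiagonal.antidiagonal n,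
          (‖PowerSeries.coeff (R := ℂ) kl.1 A‖ * ‖z‖ ^ kl.1) * (‖PowerSeries.coeff (R := ℂ) kl.2 B‖ * ‖z‖ ^ kl.2) := by
          refine Finset.sum_congr rfl fun kl _ => ?_
          rw [hf, hg]
          simp only [norm_mul, norm_pow]

theorem rep_poly (u : Polynomial ℂ) : Rep (u : PowerSeries ℂ) (fun z => u.eval z) := by
  intro z hz
  have hdeg : ∀ n ∉ Finset.range (u.natDegree + 1), u.coeff n = 0 := by
    intro n hn
    refine Polynomial.coeff_eq_zero_of_natDegree_lt ?_
    simp only [Finset.mem_range] at hn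
    omega
  constructor
  · have h := hasSum_sum_of_ne_finset_zero (s := Finset.range (u.natDegree + 1))
      (f := fun n => u.coeff n * z ^ n) (L := SummationFilter.unconditional ℕ) (fun n hn => by beta_reduce; rw [hdeg n hn, zero_mul])
    rw [← Polynomial.eval_eq_sum_range] at h
    simpa [Polynomial.coeff_coe] using h
  · apply summable_of_ne_finset_zero (s := Finset.range (u.natDegree + 1))
    intro n hn
    simp [Polynomial.coeff_coe, hdeg n hn]

theorem rep_one : Rep (1 : PowerSeries ℂ) (fun _ => 1) := by
  have h := rep_poly (1 : Polynomial ℂ)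
  simpa using h

theorem rep_pow {A : PowerSeries ℂ} {s : ℂ → ℂ} (hA : Rep A s) (n : ℕ) :
    Rep (A ^ n) (fun z => s z ^ n) := by
  induction n with
  | zero => simpa [pow_zero] using rep_one
  | succ m ih =>
    have := rep_mul ih hA
    simpa [pow_succ] using this

theorem rep_C (c : ℂ) : Rep (PowerSeries.C (R := ℂ) c) (fun _ => c) := by
  have h := rep_poly (Polynomial.C c)
  rw [Polynomial.coe_C] at h
  simpa using h

theorem rep_eval₂ {A : PowerSeries ℂ} {s : ℂ → ℂ} (hA : Rep A s) (u : Polynomial ℂ) :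
    Rep (Polynomial.eval₂ (PowerSeries.C (R := ℂ)) A u) (fun z => u.eval (s z)) := by
  induction u using Polynomial.induction_on' with
  | add p q hp hq =>
    simp only [Polynomial.eval₂_add, Polynomial.eval_add]
    exact rep_add hp hq
  | monomial n a =>
    simp only [Polynomial.eval₂_monomial, Polynomial.eval_monomial]
    exact rep_mul (rep_C a) (rep_pow hA n)

theorem rep_hasFPowerSeries {A : PowerSeries ℂ} {s : ℂ → ℂ} (hA : Rep A s) :
    HasFPowerSeriesOnBall s (FormalMultilinearSeries.ofScalars ℂ
      (fun n => PowerSeries.coeff (R := ℂ) n A)) 0 ((1/2 : ℝ≥0) : ℝ≥0∞) := by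
  have hhalf : ‖((1:ℂ)/2)‖ = 1/2 := by
    rw [norm_div, norm_one]
    simp
  have hhalf1 : ‖((1:ℂ)/2)‖ < 1 := by rw [hhalf]; norm_num
  constructor
  · apply FormalMultilinearSeries.le_radius_of_summable_norm
    have := (hA ((1:ℂ)/2) hhalf1).2
    refine this.congr fun n => ?_
    rw [FormalMultilinearSeries.ofScalars_norm, hhalf]
    norm_num
  · norm_num
  · intro y hy
    have hy1 : ‖y‖ < 1 := by
      rw [EMetric.mem_ball, edist_zero_right, enorm_eq_nnnorm] at hy
      rw [ENNReal.coe_lt_coe] at hy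
      have := (NNReal.coe_lt_coe).mpr hy
      simp only [coe_nnnorm] at this
      calc ‖y‖ < ((1/2 : ℝ≥0) : ℝ) := this
        _ < 1 := by norm_num
    have := (hA y hy1).1
    simp only [FormalMultilinearSeries.ofScalars_apply_eq, smul_eq_mul, zero_add]
    exact this

theorem rep_unique {A B : PowerSeries ℂ} {s t : ℂ → ℂ} (hA : Rep A s) (hB : Rep B t)
    (hst : ∀ z : ℂ, ‖z‖ < 1 → s z = t z) : A = B := by
  have hA' := rep_hasFPowerSeries hA
  have hB' := rep_hasFPowerSeries (rep_congr hB (fun z hz => (hst z hz).symm))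
  have := hA'.hasFPowerSeriesAt.eq_formalMultilinearSeries hB'.hasFPowerSeriesAt
  have hco := FormalMultilinearSeries.ofScalars_series_injective ℂ ℂ this
  exact PowerSeries.ext fun n => congrFun hco n

theorem dense_near (F : Subfield ℂ) (ζ₁ : ℂ)
    (hcase : ((∀ x ∈ F, x.im = 0) ∧ ζ₁.im = 0) ∨ (∃ x ∈ F, x.im ≠ 0)) :
    ∀ ε : ℝ, 0 < ε → ∃ η : ℂ, η ∈ F ∧ ‖η - ζ₁‖ < ε := by
  intro ε hε
  rcases hcase with ⟨_, him⟩ | ⟨x, hxF, hxim⟩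
  · obtain ⟨q, hq⟩ := exists_rat_near ζ₁.re hε
    refine ⟨(q : ℂ), SubfieldClass.ratCast_mem F q, ?_⟩
    have : (q:ℂ) - ζ₁ = (((q:ℝ) - ζ₁.re : ℝ) : ℂ) := Complex.ext (by simp) (by simp [him])
    rw [this, Complex.norm_real]
    rwa [abs_sub_comm] at hq
  · set t := ζ₁.im / x.im with ht
    have hax : (0:ℝ) < ‖x‖ + 1 := by positivity
    obtain ⟨q2, hq2⟩ := exists_rat_near t (show 0 < ε / (2*(‖x‖ + 1)) by positivity)
    set w := ζ₁ - (q2 : ℂ) * x with hw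
    obtain ⟨q1, hq1⟩ := exists_rat_near w.re (half_pos hε)
    refine ⟨(q1 : ℂ) + (q2 : ℂ) * x, F.add_mem (SubfieldClass.ratCast_mem F q1)
      (F.mul_mem (SubfieldClass.ratCast_mem F q2) hxF), ?_⟩
    have him : |w.im| < ε/2 := by
      have h1 : w.im = (t - q2) * x.im := by
        rw [hw]
        simp only [Complex.sub_im, Complex.mul_im, Complex.ratCast_im, Complex.ratCast_re,
          zero_mul, add_zero, zero_add]
        rw [ht]; field_simp; try ring
      rw [h1, abs_mul]
      calc |t - (q2:ℝ)| * |x.im| ≤ |t - (q2:ℝ)| * (‖x‖ + 1) := by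
            gcongr
            exact (Complex.abs_im_le_norm x).trans (by linarith)
        _ < ε / (2*(‖x‖ + 1)) * (‖x‖ + 1) := by
            gcongr
        _ = ε/2 := by field_simp; try ring
    have key : (q1:ℂ) + (q2:ℂ)*x - ζ₁ = (q1 : ℂ) - w := by rw [hw]; ring
    rw [key]
    have h2 : ‖(q1:ℂ) - w‖ ≤ |((q1:ℂ) - w).re| + |((q1:ℂ) - w).im| := by
      exact Complex.norm_le_abs_re_add_abs_im _
    have h3 : |((q1:ℂ) - w).re| < ε/2 := by
      simp only [Complex.sub_re, Complex.ratCast_re]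
      rwa [abs_sub_comm] at hq1
    have h4 : |((q1:ℂ) - w).im| < ε/2 := by
      simp only [Complex.sub_im, Complex.ratCast_im, zero_sub, abs_neg]
      exact him
    linarith

theorem exists_eta (F : Subfield ℂ) (ζ₁ : ℂ)
    (hcase : ((∀ x ∈ F, x.im = 0) ∧ ζ₁.im = 0) ∨ (∃ x ∈ F, x.im ≠ 0))
    {S : Set ℂ} (hS : S.Finite) {ε : ℝ} (hε : 0 < ε) :
    ∃ η : ℂ, η ∈ F ∧ ‖η - ζ₁‖ < ε ∧ η ∉ S := by
  obtain ⟨η₀, hη₀F, hη₀⟩ := dense_near F ζ₁ hcase (ε/2) (half_pos hε)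
  obtain ⟨q₀, hq₀0, hq₀⟩ := exists_rat_btwn (half_pos hε)
  have hq₀0' : (0:ℝ) < (q₀:ℝ) := hq₀0
  have hq₀C : (q₀:ℂ) ≠ 0 := by
    simpa using (ne_of_gt hq₀0')
  set f : ℕ → ℂ := fun n => η₀ + (q₀ : ℂ)/((n:ℂ)+1) with hf
  have hden : ∀ n : ℕ, ((n:ℂ)+1) ≠ 0 := fun n => Nat.cast_add_one_ne_zero n
  have hinj : Function.Injective f := by
    intro m n hmn
    simp only [hf, add_right_inj] at hmn
    rw [div_eq_div_iff (hden m) (hden n)] at hmn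
    have h1 := mul_left_cancel₀ hq₀C hmn
    have h2 : (n:ℂ) = (m:ℂ) := add_right_cancel h1
    exact (Nat.cast_injective h2).symm
  have hmem : ∀ n, f n ∈ F := fun n => F.add_mem hη₀F (F.div_mem (SubfieldClass.ratCast_mem F q₀)
    (F.add_mem (natCast_mem F n) F.one_mem))
  have hbound : ∀ n, ‖f n - ζ₁‖ < ε := by
    intro n
    have h5 : ‖(q₀:ℂ)/((n:ℂ)+1)‖ ≤ (q₀:ℝ) := by
      rw [norm_div]
      have hq : ‖(q₀:ℂ)‖ = (q₀:ℝ) := by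
        rw [show (q₀:ℂ) = (((q₀:ℝ)):ℂ) by push_cast; ring, Complex.norm_real,
          Real.norm_eq_abs, abs_of_pos hq₀0']
      have hn : (1:ℝ) ≤ ‖(n:ℂ)+1‖ := by
        rw [show ((n:ℂ)+1) = (((n+1:ℕ)):ℂ) by push_cast; ring, Complex.norm_natCast]
        exact_mod_cast Nat.one_le_iff_ne_zero.mpr (Nat.succ_ne_zero n)
      rw [hq]
      calc (q₀:ℝ)/‖(n:ℂ)+1‖ ≤ (q₀:ℝ)/1 := div_le_div_of_nonneg_left hq₀0'.le one_pos hn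
        _ = (q₀:ℝ) := div_one _
    have heq : f n - ζ₁ = (η₀ - ζ₁) + (q₀:ℂ)/((n:ℂ)+1) := by rw [hf]; ring
    calc ‖f n - ζ₁‖ ≤ ‖η₀ - ζ₁‖ + ‖(q₀:ℂ)/((n:ℂ)+1)‖ := by rw [heq]; exact norm_add_le _ _
      _ < ε/2 + ε/2 := by
          have := lt_of_le_of_lt h5 hq₀
          linarith
      _ = ε := by ring
  obtain ⟨η, hη⟩ := ((Set.infinite_range_of_injective hinj).diff hS).nonempty
  obtain ⟨n, rfl⟩ := hη.1
  exact ⟨f n, hmem n, hbound n, hη.2⟩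

theorem eval_mem_subfield {Fs : Subfield ℂ} {u : Polynomial ℂ} (hu : ∀ i, u.coeff i ∈ Fs)
    {x : ℂ} (hx : x ∈ Fs) : u.eval x ∈ Fs := by
  rw [Polynomial.eval_eq_sum_range]
  exact sum_mem fun i _ => Fs.mul_mem (hu i) (Fs.pow_mem hx i)

theorem eval₂_mem_subfield {Fs : Subfield ℂ} {A : PowerSeries ℂ}
    (hA : ∀ k, PowerSeries.coeff (R := ℂ) k A ∈ Fs) {u : Polynomial ℂ} (hu : ∀ i, u.coeff i ∈ Fs) :
    ∀ k, PowerSeries.coeff (R := ℂ) k (Polynomial.eval₂ (PowerSeries.C (R := ℂ)) A u) ∈ Fs := by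
  intro k
  have hmemA : A ∈ psSub Fs.toSubring := hA
  have hCmem : ∀ c ∈ Fs, PowerSeries.C (R := ℂ) c ∈ psSub Fs.toSubring := by
    intro c hc j
    rw [PowerSeries.coeff_C]
    split
    · exact hc
    · exact Fs.zero_mem
  have : Polynomial.eval₂ (PowerSeries.C (R := ℂ)) A u ∈ psSub Fs.toSubring := by
    rw [Polynomial.eval₂_eq_sum_range]
    exact Subring.sum_mem _ fun i _ =>
      Subring.mul_mem _ (hCmem _ (hu i)) (Subring.pow_mem _ hmemA i)
  exact this k

end AuxConvRoot
end AuxConvRoot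


open AuxConvRoot in

theorem algebraic_series_converging_to_root (F : Subfield ℂ)
    (p : Polynomial F) (hp : Irreducible p) (ζ₁ : ℂ)
    (hroot : Polynomial.aeval ζ₁ p = 0)
    (hcase : ((∀ x ∈ F, x.im = 0) ∧ ζ₁.im = 0) ∨ (∃ x ∈ F, x.im ≠ 0)) :
    ∃ P : Polynomial (Polynomial ℂ), P ≠ 0 ∧
      (∀ m k, ((P.coeff m).coeff k) ∈ F) ∧
      ∃ a : ℕ → ℂ, (∀ n, a n ∈ F) ∧
        Polynomial.eval₂ Polynomial.coeToPowerSeries.ringHom (PowerSeries.mk a) P = 0 ∧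
        Tendsto a atTop (𝓝 ζ₁) := by
  classical
  set ι : F →+* ℂ := algebraMap F ℂ with hιdef
  set pc : Polynomial ℂ := p.map ι with hpc
  have hpcco : ∀ i, pc.coeff i ∈ F := fun i => by
    rw [hpc, Polynomial.coeff_map]; exact (p.coeff i).2
  have hpc'co : ∀ i, (Polynomial.derivative pc).coeff i ∈ F := fun i => by
    rw [hpc, Polynomial.derivative_map, Polynomial.coeff_map]; exact ((Polynomial.derivative p).coeff i).2
  have hroot0 : Polynomial.eval ζ₁ pc = 0 := by
    rw [hpc, Polynomial.eval_map]; exact hroot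
  have hp0 : p ≠ 0 := hp.ne_zero
  have hpc0 : pc ≠ 0 := by
    rw [hpc, Ne, Polynomial.map_eq_zero]; exact hp0
  -- separability
  have hd0 : Polynomial.eval ζ₁ (Polynomial.derivative pc) ≠ 0 := by
    have hsep : p.Separable := hp.separable
    obtain ⟨u, v, huv⟩ := hsep
    have h1 := congrArg (Polynomial.aeval ζ₁) huv
    rw [map_add, map_mul, map_mul, hroot, mul_zero, zero_add, map_one] at h1
    intro h
    rw [hpc, Polynomial.derivative_map, Polynomial.eval_map, ← Polynomial.aeval_def] at h
    rw [h, mul_zero] at h1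
    exact zero_ne_one h1
  have hdpc0 : Polynomial.derivative pc ≠ 0 := by
    intro h
    rw [h] at hd0
    simp at hd0
  have hdeg1 : 1 ≤ pc.natDegree := by
    rw [hpc, p.natDegree_map ι]
    exact hp.natDegree_pos
  -- inverse function theorem setup
  have hsd := pc.hasStrictDerivAt ζ₁
  set Φ := (hsd.hasStrictFDerivAt_equiv hd0).toOpenPartialHomeomorph (fun x => Polynomial.eval x pc)
    with hΦdef
  have hζsrc : ζ₁ ∈ Φ.source :=
    (hsd.hasStrictFDerivAt_equiv hd0).mem_toOpenPartialHomeomorph_source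
  have h0tgt : (0:ℂ) ∈ Φ.target := by
    have := (hsd.hasStrictFDerivAt_equiv hd0).image_mem_toOpenPartialHomeomorph_target
    simpa [hroot0] using this
  have hψ0 : Φ.symm 0 = ζ₁ := by
    have h2 := Φ.left_inv hζsrc
    rwa [show Φ ζ₁ = 0 from hroot0] at h2
  -- choose δ
  have hcont0 : ContinuousAt Φ.symm 0 := Φ.continuousAt_symm h0tgt
  have hopen : IsOpen {x : ℂ | Polynomial.eval x (Polynomial.derivative pc) ≠ 0} :=
    (isOpen_compl_singleton (x := (0:ℂ))).preimage (Polynomial.derivative pc).continuous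
  have hnhds : {w : ℂ | w ∈ Φ.target ∧ Polynomial.eval (Φ.symm w) (Polynomial.derivative pc) ≠ 0}
      ∈ 𝓝 (0:ℂ) := by
    rw [Set.setOf_and]
    have h2 : Φ.symm ⁻¹' {x : ℂ | Polynomial.eval x (Polynomial.derivative pc) ≠ 0} ∈ 𝓝 (0:ℂ) :=
      hcont0.preimage_mem_nhds (by rw [hψ0]; exact hopen.mem_nhds hd0)
    exact Filter.inter_mem (Φ.open_target.mem_nhds h0tgt) h2
  obtain ⟨δ, hδ0, hδ⟩ := Metric.mem_nhds_iff.mp hnhds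
  have hψd : ∀ w ∈ Metric.ball (0:ℂ) δ, HasDerivAt Φ.symm
      ((Polynomial.eval (Φ.symm w) (Polynomial.derivative pc))⁻¹) w := by
    intro w hw
    obtain ⟨hwt, hwne⟩ := hδ hw
    have hfg : ∀ᶠ y in 𝓝 w, Polynomial.eval (Φ.symm y) pc = y := by
      filter_upwards [Φ.open_target.mem_nhds hwt] with y hy
      exact Φ.right_inv hy
    exact (HasStrictDerivAt.of_local_left_inverse (Φ.continuousAt_symm hwt)
      (pc.hasStrictDerivAt (Φ.symm w)) hwne hfg).hasDerivAt
  -- choose ε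
  have hUopen : IsOpen (Φ.source ∩ (fun x => Polynomial.eval x pc) ⁻¹' Metric.ball 0 (δ/2)) :=
    Φ.open_source.inter (Metric.isOpen_ball.preimage pc.continuous)
  have hζU : ζ₁ ∈ Φ.source ∩ (fun x => Polynomial.eval x pc) ⁻¹' Metric.ball 0 (δ/2) := by
    refine ⟨hζsrc, ?_⟩
    simp only [Set.mem_preimage, Metric.mem_ball, hroot0, dist_self]
    linarith
  obtain ⟨ε, hε0, hεball⟩ := Metric.isOpen_iff.mp hUopen ζ₁ hζU
  -- choose η
  have hSfin : ({x : ℂ | pc.IsRoot x} ∪ {x : ℂ | (Polynomial.derivative pc).IsRoot x}).Finite :=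
    (Polynomial.finite_setOf_isRoot hpc0).union (Polynomial.finite_setOf_isRoot hdpc0)
  obtain ⟨η, hηF, hηε, hηS⟩ := exists_eta F ζ₁ hcase hSfin hε0
  have hηU := hεball (show η ∈ Metric.ball ζ₁ ε by rwa [Metric.mem_ball, dist_eq_norm])
  obtain ⟨hηsrc, hηball⟩ := hηU
  set α : ℂ := Polynomial.eval η pc with hα
  have hα0 : α ≠ 0 := fun h => hηS (Or.inl h)
  have hαF : α ∈ F := eval_mem_subfield hpcco hηF
  have hηd0 : Polynomial.eval η (Polynomial.derivative pc) ≠ 0 := fun h => hηS (Or.inr h)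
  have hηdF : Polynomial.eval η (Polynomial.derivative pc) ∈ F := eval_mem_subfield hpc'co hηF
  have hαδ : ‖α‖ < δ/2 := by
    simpa [Metric.mem_ball, dist_zero_right] using hηball
  -- radius parameters
  have hnormα : 0 < ‖α‖ := norm_pos_iff.mpr hα0
  obtain ⟨R, hR1, hRδ⟩ : ∃ R : ℝ, 1 < R ∧ ‖α‖ * (1 + R) = δ := by
    refine ⟨δ/‖α‖ - 1, ?_, ?_⟩
    · rw [lt_sub_iff_add_lt, lt_div_iff₀ hnormα]
      linarith
    · field_simp
      ring
  obtain ⟨r, hrco⟩ : ∃ r : NNReal, (r:ℝ) = (1+R)/2 :=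
    ⟨Real.toNNReal _, Real.coe_toNNReal _ (by linarith)⟩
  have hr1 : (1:ℝ) < r := by rw [hrco]; linarith
  have hrR : (r:ℝ) < R := by rw [hrco]; linarith
  have hr0 : 0 < r := by
    have h2 : (0:ℝ) < r := lt_trans one_pos hr1
    exact_mod_cast h2
  have hball : ∀ z : ℂ, ‖z‖ ≤ (r:ℝ) → α * (1 - z) ∈ Metric.ball (0:ℂ) δ := by
    intro z hz
    rw [Metric.mem_ball, dist_zero_right, norm_mul]
    calc ‖α‖ * ‖1 - z‖ ≤ ‖α‖ * (1 + ‖z‖) := by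
          gcongr
          exact (norm_sub_le _ _).trans (by rw [norm_one])
      _ ≤ ‖α‖ * (1 + (r:ℝ)) := by gcongr
      _ < ‖α‖ * (1 + R) := by
          exact mul_lt_mul_of_pos_left (by linarith) hnormα
      _ = δ := hRδ
  set g : ℂ → ℂ := fun z => Φ.symm (α * (1 - z)) with hgdef
  have hgd : DifferentiableOn ℂ g (Metric.closedBall 0 r) := by
    intro z hz
    rw [Metric.mem_closedBall, dist_zero_right] at hz
    have hin : HasDerivAt (fun z : ℂ => α * (1 - z)) (α * (-1)) z :=
      ((hasDerivAt_id z).const_sub 1).const_mul α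
    have hout := hψd _ (hball z hz)
    have hcomp := HasDerivAt.comp z hout hin
    exact hcomp.differentiableAt.differentiableWithinAt
  have hFPS := hgd.hasFPowerSeriesOnBall hr0
  set q := cauchyPowerSeries g 0 r with hqdef
  set b : ℕ → ℂ := fun n => q.coeff n with hbdef
  have hsum : ∀ z : ℂ, ‖z‖ < (r:ℝ) → HasSum (fun n => b n * z ^ n) (g z) := by
    intro z hz
    have hzmem : z ∈ Metric.eball (0:ℂ) r := by
      rw [EMetric.mem_ball, edist_zero_right, enorm_eq_nnnorm, ENNReal.coe_lt_coe, ← NNReal.coe_lt_coe,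
        coe_nnnorm]
      exact hz
    have h2 := hFPS.hasSum hzmem
    rw [zero_add] at h2
    have heq : (fun n => q n fun _ => z) = fun n => b n * z ^ n := by
      funext n
      rw [q.apply_eq_pow_smul_coeff, smul_eq_mul]
      rw [hbdef]
      ring
    rwa [heq] at h2
  have hsummable : ∀ t : NNReal, (t : ENNReal) < q.radius →
      Summable (fun n => ‖b n‖ * (t:ℝ) ^ n) := by
    intro t ht
    have h2 := q.summable_norm_mul_pow ht
    refine h2.congr fun n => ?_
    rw [q.norm_apply_eq_norm_coef]
  have hRepB : Rep (PowerSeries.mk b) g := by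
    intro z hz
    have hzr : ‖z‖ < (r:ℝ) := lt_trans hz hr1
    constructor
    · have h2 := hsum z hzr
      have heq : (fun n => PowerSeries.coeff (R := ℂ) n (PowerSeries.mk b) * z ^ n)
          = fun n => b n * z ^ n := by
        funext n; rw [PowerSeries.coeff_mk]
      rwa [heq]
    · have hlt : (‖z‖₊ : ENNReal) < q.radius := by
        refine lt_of_lt_of_le ?_ hFPS.r_le
        rw [ENNReal.coe_lt_coe, ← NNReal.coe_lt_coe, coe_nnnorm]
        exact hzr
      have h2 := hsummable ‖z‖₊ hlt
      refine h2.congr fun n => ?_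
      rw [PowerSeries.coeff_mk, coe_nnnorm]
  have hfun : ∀ z : ℂ, ‖z‖ < 1 → Polynomial.eval (g z) pc = α * (1 - z) := by
    intro z hz
    have hmem := hball z (le_of_lt (lt_trans hz hr1))
    have htgt : α * (1 - z) ∈ Φ.target := (hδ hmem).1
    exact Φ.right_inv htgt
  have hg0 : g 0 = η := by
    rw [hgdef]
    simp only [sub_zero, mul_one]
    have h2 := Φ.left_inv hηsrc
    rwa [show Φ η = α from rfl] at h2
  have hg1 : g 1 = ζ₁ := by
    rw [hgdef]
    simp only [sub_self, mul_zero]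
    exact hψ0
  have hb0 : b 0 = η := by
    have h2 := hFPS.coeff_zero (fun _ => 1)
    rw [hg0] at h2
    exact h2
  have hM : Polynomial.eval₂ (PowerSeries.C (R := ℂ)) (PowerSeries.mk b) pc
      = PowerSeries.C (R := ℂ) α * (1 - PowerSeries.X) := by
    have h1 := rep_eval₂ hRepB pc
    have h2 : Rep (PowerSeries.C (R := ℂ) α * (1 - PowerSeries.X)) (fun z => α * (1 - z)) := by
      have h3 := rep_poly (Polynomial.C α * (1 - Polynomial.X))
      have h4 : ((Polynomial.C α * (1 - Polynomial.X) : Polynomial ℂ) : PowerSeries ℂ)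
          = PowerSeries.C (R := ℂ) α * (1 - PowerSeries.X) := by
        simp [Polynomial.coe_mul, Polynomial.coe_sub, Polynomial.coe_one, Polynomial.coe_X,
          Polynomial.coe_C]
      rw [h4] at h3
      refine rep_congr h3 fun z hz => ?_
      simp
    exact rep_unique h1 h2 (fun z hz => hfun z hz)
  -- coefficients of b lie in F
  have hbF : ∀ n, b n ∈ F := by
    intro n
    induction n using Nat.strong_induction_on with
    | _ n ih =>
      rcases Nat.eq_zero_or_pos n with rfl | hn
      · rw [hb0]; exact hηF
      · set T : PowerSeries ℂ := PowerSeries.mk (fun j => if j < n then b j else 0) with hTdef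
        set Ebig : PowerSeries ℂ := PowerSeries.mk (fun j => if j < n then 0 else b j) with hEdef
        have hBTE : PowerSeries.mk b = T + Ebig := by
          ext k
          rw [map_add, hTdef, hEdef, PowerSeries.coeff_mk, PowerSeries.coeff_mk,
            PowerSeries.coeff_mk]
          by_cases h : k < n <;> simp [h]
        obtain ⟨kk, hkk⟩ := (pc.map (PowerSeries.C (R := ℂ))).binomExpansion T Ebig
        rw [← hBTE] at hkk
        simp only [Polynomial.derivative_map, Polynomial.eval_map] at hkk
        rw [hM] at hkk
        have hcoeff := congrArg (PowerSeries.coeff (R := ℂ) n) hkk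
        rw [map_add, map_add] at hcoeff
        -- the quadratic term vanishes in degree n
        have hE2 : ∀ j, j ≤ n → PowerSeries.coeff (R := ℂ) j (Ebig^2) = 0 := by
          intro j hj
          rw [sq, PowerSeries.coeff_mul]
          refine Finset.sum_eq_zero fun kl hkl => ?_
          have hklsum := Finset.HasAntidiagonal.mem_antidiagonal.mp hkl
          by_cases h1 : kl.1 < n
          · rw [hEdef, PowerSeries.coeff_mk]
            simp [h1]
          · have h2 : kl.2 < n := by omega
            rw [hEdef]
            simp only [PowerSeries.coeff_mk]
            simp [h2]
        have hquad : PowerSeries.coeff (R := ℂ) n (kk * Ebig^2) = 0 := by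
          rw [PowerSeries.coeff_mul]
          refine Finset.sum_eq_zero fun kl hkl => ?_
          have hklsum := Finset.HasAntidiagonal.mem_antidiagonal.mp hkl
          rw [hE2 kl.2 (by omega), mul_zero]
        have hTc : PowerSeries.constantCoeff (R := ℂ) T = η := by
          rw [hTdef]
          rw [PowerSeries.constantCoeff_mk]
          rw [if_pos hn, hb0]
        -- the linear term
        have hderiv : PowerSeries.coeff (R := ℂ) n
            (Polynomial.eval₂ (PowerSeries.C (R := ℂ)) T (Polynomial.derivative pc) * Ebig)
            = Polynomial.eval η (Polynomial.derivative pc) * b n := by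
          rw [PowerSeries.coeff_mul]
          have hsingle : ∀ kl ∈ Finset.HasAntidiagonal.antidiagonal n, kl ≠ ((0:ℕ), n) →
              PowerSeries.coeff (R := ℂ) kl.1 (Polynomial.eval₂ (PowerSeries.C (R := ℂ)) T
                (Polynomial.derivative pc)) * PowerSeries.coeff (R := ℂ) kl.2 Ebig = 0 := by
            rintro ⟨k1, k2⟩ hkl hne
            have hklsum := Finset.HasAntidiagonal.mem_antidiagonal.mp hkl
            simp only [ne_eq, Prod.mk.injEq, not_and] at hne
            have h2 : k2 < n := by
              rcases lt_or_ge k2 n with h | h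
              · exact h
              · exfalso
                have hk2 : k2 = n := by omega
                have hk1 : k1 = 0 := by omega
                exact (hne hk1) hk2
            rw [hEdef]
            simp only [PowerSeries.coeff_mk]
            simp [h2]
          rw [Finset.sum_eq_single_of_mem ((0:ℕ), n) (by simp) hsingle]
          have hc0 : PowerSeries.coeff (R := ℂ) 0 (Polynomial.eval₂ (PowerSeries.C (R := ℂ)) T
              (Polynomial.derivative pc)) = Polynomial.eval η (Polynomial.derivative pc) := by
            rw [PowerSeries.coeff_zero_eq_constantCoeff, Polynomial.hom_eval₂]
            have hcomp : (PowerSeries.constantCoeff (R := ℂ)).comp (PowerSeries.C (R := ℂ)) = RingHom.id ℂ :=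
              RingHom.ext fun x => PowerSeries.constantCoeff_C x
            rw [hcomp, hTc]
            rfl
          have hcn : PowerSeries.coeff (R := ℂ) n Ebig = b n := by
            rw [hEdef]
            simp only [PowerSeries.coeff_mk]
            simp
          rw [hc0, hcn]
        -- membership of the T-term
        have hTmem : ∀ k, PowerSeries.coeff (R := ℂ) k T ∈ F := by
          intro k
          rw [hTdef, PowerSeries.coeff_mk]
          split
          · next h => exact ih k h
          · exact F.zero_mem
        have hTF : PowerSeries.coeff (R := ℂ) n (Polynomial.eval₂ (PowerSeries.C (R := ℂ)) T pc) ∈ F :=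
          eval₂_mem_subfield hTmem hpcco n
        have hLHSF : PowerSeries.coeff (R := ℂ) n (PowerSeries.C (R := ℂ) α * (1 - PowerSeries.X)) ∈ F := by
          rw [mul_sub, mul_one, map_sub]
          refine F.sub_mem ?_ ?_
          · rw [PowerSeries.coeff_C]
            split
            · exact hαF
            · exact F.zero_mem
          · rw [PowerSeries.coeff_C_mul, PowerSeries.coeff_X]
            split
            · rw [mul_one]; exact hαF
            · rw [mul_zero]; exact F.zero_mem
        rw [hderiv, hquad, add_zero] at hcoeff
        have hsolve : b n = (PowerSeries.coeff (R := ℂ) n (PowerSeries.C (R := ℂ) α * (1 - PowerSeries.X))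
            - PowerSeries.coeff (R := ℂ) n (Polynomial.eval₂ (PowerSeries.C (R := ℂ)) T pc))
            / Polynomial.eval η (Polynomial.derivative pc) := by
          rw [eq_div_iff hηd0]
          linear_combination -hcoeff
        rw [hsolve]
        exact F.div_mem (F.sub_mem hLHSF hTF) hηdF
  -- the sequence of partial sums
  set a : ℕ → ℂ := fun n => ∑ i ∈ Finset.range (n+1), b i with hadef
  have haF : ∀ n, a n ∈ F := fun n => sum_mem fun i _ => hbF i
  have hatend : Tendsto a atTop (𝓝 ζ₁) := by
    have hb_sum : HasSum b ζ₁ := by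
      have h2 := hsum 1 (by rw [norm_one]; exact hr1)
      rw [hg1] at h2
      have heq : (fun n => b n * (1:ℂ) ^ n) = b := by funext n; rw [one_pow, mul_one]
      rwa [heq] at h2
    have h3 := hb_sum.tendsto_sum_nat
    have h4 : Tendsto (fun n : ℕ => n + 1) atTop atTop := Filter.tendsto_add_atTop_nat 1
    exact h3.comp h4
  -- the power series identity (1 - X) * mk a = mk b
  have hmkba : ((1 : PowerSeries ℂ) - PowerSeries.X) * PowerSeries.mk a = PowerSeries.mk b := by
    ext k
    rw [sub_mul, one_mul, map_sub]
    cases k with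
    | zero =>
      rw [PowerSeries.coeff_mk]
      have h0 : PowerSeries.coeff (R := ℂ) 0 (PowerSeries.X * PowerSeries.mk a) = 0 := by
        rw [PowerSeries.coeff_mul]
        simp
      rw [h0, sub_zero, PowerSeries.coeff_mk, hadef]
      simp
    | succ k =>
      rw [PowerSeries.coeff_succ_X_mul, PowerSeries.coeff_mk, PowerSeries.coeff_mk,
        PowerSeries.coeff_mk]
      show (∑ i ∈ Finset.range (k+1+1), b i) - ∑ i ∈ Finset.range (k+1), b i = b (k+1)
      rw [Finset.sum_range_succ]
      ring
  -- construct P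
  set w : Polynomial ℂ := 1 - Polynomial.X with hwdef
  set d : ℕ := pc.natDegree with hddef
  set P : Polynomial (Polynomial ℂ) :=
    (∑ i ∈ Finset.range (d+1), Polynomial.C (Polynomial.C (pc.coeff i) * w ^ i) * Polynomial.X ^ i)
      - Polynomial.C (Polynomial.C α * w) with hPdef
  have hwF : ∀ j, w.coeff j ∈ F := by
    intro j
    rw [hwdef, Polynomial.coeff_sub]
    refine F.sub_mem ?_ ?_
    · rw [Polynomial.coeff_one]
      split
      · exact F.one_mem
      · exact F.zero_mem
    · rw [Polynomial.coeff_X]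
      split
      · exact F.one_mem
      · exact F.zero_mem
  refine ⟨P, ?_, ?_, a, haF, ?_, hatend⟩
  · -- P ≠ 0
    intro hP0
    have hPc : P.coeff d = Polynomial.C (pc.coeff d) * w ^ d := by
      rw [hPdef, Polynomial.coeff_sub, Polynomial.finset_sum_coeff]
      have hsum2 : ∑ i ∈ Finset.range (d+1),
          (Polynomial.C (Polynomial.C (pc.coeff i) * w ^ i) * Polynomial.X ^ i).coeff d
          = Polynomial.C (pc.coeff d) * w ^ d := by
        rw [Finset.sum_eq_single_of_mem d (Finset.self_mem_range_succ d)]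
        · rw [Polynomial.coeff_C_mul, Polynomial.coeff_X_pow, if_pos rfl, mul_one]
        · intro i hi hne
          rw [Polynomial.coeff_C_mul, Polynomial.coeff_X_pow,
            if_neg (fun h => hne h.symm), mul_zero]
      rw [hsum2]
      have hz : (Polynomial.C (Polynomial.C α * w)).coeff d = 0 := by
        rw [Polynomial.coeff_C, if_neg (by omega)]
      rw [hz, sub_zero]
    have hcdne : Polynomial.C (pc.coeff d) * w ^ d ≠ 0 := by
      apply mul_ne_zero
      · rw [Ne, Polynomial.C_eq_zero]
        exact Polynomial.leadingCoeff_ne_zero.mpr hpc0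
      · apply pow_ne_zero
        intro hw0
        have h2 := congrArg (fun q => Polynomial.coeff q 0) hw0
        rw [hwdef] at h2
        simp at h2
    rw [hP0, Polynomial.coeff_zero] at hPc
    exact hcdne hPc.symm
  · -- coefficients in F
    intro m k
    have hPmem : ∀ k2, P.coeff k2 ∈ polySub ℂ F.toSubring := by
      have hmemC : ∀ c ∈ F, Polynomial.C c ∈ polySub ℂ F.toSubring := by
        intro c hc k3
        rw [Polynomial.coeff_C]
        split
        · exact hc
        · exact F.zero_mem
      have hmemW : w ∈ polySub ℂ F.toSubring := hwF
      have hmemX : (Polynomial.X : Polynomial (Polynomial ℂ))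
          ∈ polySub (Polynomial ℂ) (polySub ℂ F.toSubring) := by
        intro k3
        rw [Polynomial.coeff_X]
        split
        · exact Subring.one_mem _
        · exact Subring.zero_mem _
      have hmemOC : ∀ u : Polynomial ℂ, u ∈ polySub ℂ F.toSubring →
          Polynomial.C u ∈ polySub (Polynomial ℂ) (polySub ℂ F.toSubring) := by
        intro u hu k3
        rw [Polynomial.coeff_C]
        split
        · exact hu
        · exact Subring.zero_mem _
      have hPm : P ∈ polySub (Polynomial ℂ) (polySub ℂ F.toSubring) := by
        rw [hPdef]
        refine Subring.sub_mem _ ?_ ?_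
        · refine Subring.sum_mem _ fun i _ => ?_
          exact Subring.mul_mem _
            (hmemOC _ (Subring.mul_mem _ (hmemC _ (hpcco i)) (Subring.pow_mem _ hmemW i)))
            (Subring.pow_mem _ hmemX i)
        · exact hmemOC _ (Subring.mul_mem _ (hmemC _ hαF) hmemW)
      exact hPm
    exact hPmem m k
  · -- the power series equation
    set φ : Polynomial ℂ →+* PowerSeries ℂ := Polynomial.coeToPowerSeries.ringHom with hφ
    have hφw : φ w = 1 - PowerSeries.X := by
      rw [hwdef, map_sub, map_one, hφ, Polynomial.coeToPowerSeries.ringHom_apply,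
        Polynomial.coe_X]
    have hφC : ∀ c : ℂ, φ (Polynomial.C c) = PowerSeries.C (R := ℂ) c := by
      intro c
      rw [hφ, Polynomial.coeToPowerSeries.ringHom_apply, Polynomial.coe_C]
    have hterm : ∀ i, Polynomial.eval₂ φ (PowerSeries.mk a)
        (Polynomial.C (Polynomial.C (pc.coeff i) * w ^ i) * Polynomial.X ^ i)
        = PowerSeries.C (R := ℂ) (pc.coeff i) * (PowerSeries.mk b) ^ i := by
      intro i
      rw [Polynomial.eval₂_mul, Polynomial.eval₂_C, Polynomial.eval₂_X_pow,
        map_mul, map_pow, hφw, hφC, mul_assoc, ← mul_pow, hmkba]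
    rw [hPdef, Polynomial.eval₂_sub, Polynomial.eval₂_finset_sum, Polynomial.eval₂_C]
    have hsum3 : ∑ i ∈ Finset.range (d+1), Polynomial.eval₂ φ (PowerSeries.mk a)
        (Polynomial.C (Polynomial.C (pc.coeff i) * w ^ i) * Polynomial.X ^ i)
        = ∑ i ∈ Finset.range (d+1), PowerSeries.C (R := ℂ) (pc.coeff i) * (PowerSeries.mk b) ^ i :=
      Finset.sum_congr rfl fun i _ => hterm i
    rw [hsum3, hddef, ← Polynomial.eval₂_eq_sum_range, hM, map_mul, hφw, hφC, sub_self]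
end
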